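/- arXiv:2007.08329 — 5 statements merged into one kernel-verified Lean document; each statement's English description precedes it below -/
import Mathlib

section
/- Let v : Z → [0,∞) satisfy sup_{|y|<σ} Σ_{ξ∈Z} e^{-2yξ} v(ξ) ≤ M². Then Σ_{ξ∈Z} e^{2σ|ξ|} v(ξ) ≤ 2M². -/
/-!
Each weight `e^{-2yξ} v(ξ)` is continuous in `y`, so `y ↦ Σ_ξ e^{-2yξ} v(ξ)` is lower
semicontinuous and the bound `M²` on `(-σ, σ)` extends to the endpoints `y = ±σ` (Fatou).
Since `e^{2σ|ξ|} ≤ e^{2σξ} + e^{-2σξ}`, the sum in question is at most the sum of the values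
at `y = -σ` and `y = σ`.
-/

open scoped ENNReal

open Set

theorem LowerSemicontinuous.le_of_mem_closure {α γ : Type*} [TopologicalSpace α]
    [LinearOrder γ] [TopologicalSpace γ] [ClosedIicTopology γ] {f : α → γ}
    (hf : LowerSemicontinuous f) {s : Set α} {c : γ} (h : ∀ x ∈ s, f x ≤ c) {x : α}
    (hx : x ∈ closure s) : f x ≤ c :=
  closure_minimal h (hf.isClosed_preimage c) hx

theorem continuous_ofReal_exp_mul_const {α : Type*} [TopologicalSpace α] {g : α → ℝ}
    (hg : Continuous g) (c : ℝ≥0∞) :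
    Continuous fun y => ENNReal.ofReal (Real.exp (g y)) * c :=
  continuous_iff_continuousAt.2 fun y =>
    ENNReal.Tendsto.mul_const
      ((ENNReal.continuous_ofReal.comp (Real.continuous_exp.comp hg)).tendsto y)
      (Or.inl (by simp [Real.exp_pos]))

theorem lowerSemicontinuous_tsum_ofReal_exp_mul {ι α : Type*} [TopologicalSpace α]
    {g : ι → α → ℝ} (hg : ∀ i, Continuous (g i)) (v : ι → ℝ≥0∞) :
    LowerSemicontinuous fun y => ∑' i, ENNReal.ofReal (Real.exp (g i y)) * v i :=
  lowerSemicontinuous_tsum fun i =>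
    (continuous_ofReal_exp_mul_const (hg i) (v i)).lowerSemicontinuous

theorem exp_two_mul_abs_le (σ x : ℝ) (hσ : 0 ≤ σ) :
    Real.exp (2 * σ * |x|) ≤ Real.exp (-2 * σ * x) + Real.exp (-2 * (-σ) * x) := by
  have h := Real.exp_abs_le (2 * σ * x)
  rw [abs_mul, abs_of_nonneg (by positivity : 0 ≤ 2 * σ)] at h
  convert h using 1
  rw [add_comm]
  ring_nf

theorem statement2_general (σ M : ℝ) (hσ : 0 < σ) (v : ℤ → ℝ≥0∞)
    (h : ∀ y : ℝ, |y| < σ →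
      (∑' ξ : ℤ, ENNReal.ofReal (Real.exp (-2 * y * (ξ : ℝ))) * v ξ)
        ≤ ENNReal.ofReal (M ^ 2)) :
    (∑' ξ : ℤ, ENNReal.ofReal (Real.exp (2 * σ * |(ξ : ℝ)|)) * v ξ)
      ≤ 2 * ENNReal.ofReal (M ^ 2) := by
  have hlsc := lowerSemicontinuous_tsum_ofReal_exp_mul
    (g := fun (ξ : ℤ) (y : ℝ) => -2 * y * ξ) (fun _ => by fun_prop) v
  have hendpoint : ∀ y ∈ ({σ, -σ} : Set ℝ),
      (∑' ξ : ℤ, ENNReal.ofReal (Real.exp (-2 * y * (ξ : ℝ))) * v ξ)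
        ≤ ENNReal.ofReal (M ^ 2) := by
    intro y hy
    refine hlsc.le_of_mem_closure (s := Ioo (-σ) σ) (fun y hy => h y (abs_lt.2 hy)) ?_
    rw [closure_Ioo (by linarith)]
    rcases hy with rfl | rfl <;> constructor <;> linarith
  calc (∑' ξ : ℤ, ENNReal.ofReal (Real.exp (2 * σ * |(ξ : ℝ)|)) * v ξ)
      ≤ ∑' ξ : ℤ, (ENNReal.ofReal (Real.exp (-2 * σ * (ξ : ℝ))) * v ξ
          + ENNReal.ofReal (Real.exp (-2 * (-σ) * (ξ : ℝ))) * v ξ) := by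
        refine ENNReal.tsum_le_tsum fun ξ => ?_
        rw [← add_mul, ← ENNReal.ofReal_add (Real.exp_pos _).le (Real.exp_pos _).le]
        gcongr
        exact exp_two_mul_abs_le σ ξ hσ.le
    _ = (∑' ξ : ℤ, ENNReal.ofReal (Real.exp (-2 * σ * (ξ : ℝ))) * v ξ)
          + ∑' ξ : ℤ, ENNReal.ofReal (Real.exp (-2 * (-σ) * (ξ : ℝ))) * v ξ :=
        ENNReal.tsum_add
    _ ≤ 2 * ENNReal.ofReal (M ^ 2) := by
        rw [two_mul]
        exact add_le_add (hendpoint σ (by simp)) (hendpoint (-σ) (by simp))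

/-- If `v : ℤ → [0,∞]` satisfies
`sup_{|y|<σ} Σ_ξ e^{-2yξ} v(ξ) ≤ M²`, then `Σ_ξ e^{2σ|ξ|} v(ξ) ≤ 2M²`. -/
theorem statement2 (σ M : ℝ) (hσ : 0 < σ) (hM : 0 ≤ M) (v : ℤ → ℝ≥0∞)
    (h : ∀ y : ℝ, |y| < σ →
      (∑' ξ : ℤ, ENNReal.ofReal (Real.exp (-2 * y * (ξ : ℝ))) * v ξ)
        ≤ ENNReal.ofReal (M ^ 2)) :
    (∑' ξ : ℤ, ENNReal.ofReal (Real.exp (2 * σ * |(ξ : ℝ)|)) * v ξ)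
      ≤ 2 * ENNReal.ofReal (M ^ 2) :=
  statement2_general σ M hσ v h
end

section
/- Let d ≥ 2, σ > 0, and 0 < δ < σ. Suppose v : Z^d → [0,∞) satisfies sup_{y∈R^d, |y|<σ} Σ_{ξ∈Z^d} e^{-2y·ξ} v(ξ) ≤ M². Then there exists a constant C_δ (depending on δ, σ, d but not on v, M) such that Σ_{ξ∈Z^d} e^{2δ|ξ|} v(ξ) ≤ C_δ M². -/
open scoped ENNReal BigOperators

/-- Euclidean norm of a lattice point `ξ ∈ ℤ^d`. -/
noncomputable def latNorm {d : ℕ} (ξ : Fin d → ℤ) : ℝ :=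
  Real.sqrt (∑ i, ((ξ i : ℝ)) ^ 2)

/-!
By compactness of the unit sphere there are finitely many vectors `y₁, …, y_N` of norm `< σ`
such that every `x` satisfies `δ‖x‖ ≤ ⟪y_j, x⟫` for some `j`. Hence
`e^{2δ|ξ|} ≤ ∑_j e^{-2(-y_j)·ξ}`, and summing against `v` bounds the weighted sum by `N M²`.
-/

open Metric in
theorem exists_finset_norm_lt_forall_mul_norm_le_inner {E : Type*} [NormedAddCommGroup E]
    [InnerProductSpace ℝ E] [FiniteDimensional ℝ E] {δ σ : ℝ} (hσ : 0 < σ) (hδσ : δ < σ) :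
    ∃ s : Finset E, 0 ∈ s ∧ (∀ y ∈ s, ‖y‖ < σ) ∧
      ∀ x : E, ∃ y ∈ s, δ * ‖x‖ ≤ inner ℝ y x := by
  classical
  have hcover : sphere (0 : E) 1 ⊆ ⋃ u ∈ ball (0 : E) σ, {w | δ < inner ℝ u w} := by
    intro w hw
    rw [mem_sphere_zero_iff_norm] at hw
    obtain ⟨c, hc, hcσ⟩ := exists_between (max_lt hδσ hσ)
    have hc0 : 0 ≤ c := (le_max_right δ 0).trans hc.le
    refine Set.mem_biUnion (x := c • w) ?_ ?_
    · simpa [norm_smul, hw, abs_of_nonneg hc0] using hcσ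
    · simpa [real_inner_smul_left, real_inner_self_eq_norm_sq, hw] using
        (le_max_left δ 0).trans_lt hc
  obtain ⟨t, htσ, ht, htcover⟩ := (isCompact_sphere (0 : E) 1).elim_finite_subcover_image
    (fun u _ => isOpen_lt continuous_const (continuous_const.inner continuous_id)) hcover
  refine ⟨insert 0 ht.toFinset, Finset.mem_insert_self _ _, ?_, fun x => ?_⟩
  · simp only [Finset.mem_insert, Set.Finite.mem_toFinset, forall_eq_or_imp, norm_zero]
    exact ⟨hσ, fun y hy => mem_ball_zero_iff.mp (htσ hy)⟩
  rcases eq_or_ne x 0 with rfl | hx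
  · exact ⟨0, Finset.mem_insert_self _ _, by simp⟩
  have hxn : 0 < ‖x‖ := norm_pos_iff.mpr hx
  have hu : ‖x‖⁻¹ • x ∈ sphere (0 : E) 1 := by
    rw [mem_sphere_zero_iff_norm, norm_smul, norm_inv, norm_norm, inv_mul_cancel₀ hxn.ne']
  obtain ⟨y, hy, hδy⟩ := Set.mem_iUnion₂.mp (htcover hu)
  refine ⟨y, Finset.mem_insert_of_mem (ht.mem_toFinset.mpr hy), ?_⟩
  have : δ < ‖x‖⁻¹ * inner ℝ y x := by simpa [real_inner_smul_right] using hδy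
  rw [lt_inv_mul_iff₀ hxn, mul_comm] at this
  exact this.le

theorem ENNReal.tsum_mul_le_card_mul {α ι : Type*} (s : Finset ι) (f : α → ℝ≥0∞)
    (g : ι → α → ℝ≥0∞) (v : α → ℝ≥0∞) {B : ℝ≥0∞} (hfg : ∀ a, ∃ i ∈ s, f a ≤ g i a)
    (hg : ∀ i ∈ s, ∑' a, g i a * v a ≤ B) :
    ∑' a, f a * v a ≤ s.card * B := by
  have hf : ∀ a, f a ≤ ∑ i ∈ s, g i a := fun a =>
    let ⟨i, hi, hfi⟩ := hfg a
    hfi.trans (Finset.single_le_sum (f := fun j => g j a) (fun _ _ => zero_le) hi)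
  calc ∑' a, f a * v a ≤ ∑' a, ∑ i ∈ s, g i a * v a := by
        gcongr with a
        rw [← Finset.sum_mul]
        exact mul_le_mul_left (hf a) _
    _ = ∑ i ∈ s, ∑' a, g i a * v a := Summable.tsum_finsetSum fun _ _ => ENNReal.summable
    _ ≤ ∑ i ∈ s, B := Finset.sum_le_sum hg
    _ = s.card * B := by rw [Finset.sum_const, nsmul_eq_mul]

theorem EuclideanSpace.real_norm_eq {n : Type*} [Fintype n] (x : EuclideanSpace ℝ n) :
    ‖x‖ = Real.sqrt (∑ i, x i ^ 2) := by
  simp [EuclideanSpace.norm_eq, sq_abs]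

theorem latNorm_eq_norm {d : ℕ} (ξ : Fin d → ℤ) :
    latNorm ξ = ‖WithLp.toLp 2 (fun i => (ξ i : ℝ))‖ := by
  simp [latNorm, EuclideanSpace.real_norm_eq]

theorem statement3_general (d : ℕ) (σ δ : ℝ) (hσ : 0 < σ)
    (hδσ : δ < σ) :
    ∃ C : ℝ, 0 < C ∧ ∀ (v : (Fin d → ℤ) → ℝ≥0∞) (M : ℝ),
      (∀ y : Fin d → ℝ, Real.sqrt (∑ i, (y i) ^ 2) < σ →
        (∑' ξ : Fin d → ℤ,
            ENNReal.ofReal (Real.exp (-2 * ∑ i, y i * (ξ i : ℝ))) * v ξ)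
          ≤ ENNReal.ofReal (M ^ 2)) →
      (∑' ξ : Fin d → ℤ, ENNReal.ofReal (Real.exp (2 * δ * latNorm ξ)) * v ξ)
        ≤ ENNReal.ofReal C * ENNReal.ofReal (M ^ 2) := by
  obtain ⟨s, hs0, hsσ, hcover⟩ :=
    exists_finset_norm_lt_forall_mul_norm_le_inner (E := EuclideanSpace ℝ (Fin d)) hσ hδσ
  refine ⟨s.card, Nat.cast_pos.mpr (Finset.card_pos.mpr ⟨0, hs0⟩), fun v M hv => ?_⟩
  rw [ENNReal.ofReal_natCast]
  refine ENNReal.tsum_mul_le_card_mul s _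
    (fun y ξ => ENNReal.ofReal (Real.exp (-2 * ∑ i, -y i * (ξ i : ℝ)))) v (fun ξ => ?_)
    (fun y hy => ?_)
  · obtain ⟨y, hy, hδy⟩ := hcover (WithLp.toLp 2 (fun i => (ξ i : ℝ)))
    refine ⟨y, hy, ENNReal.ofReal_le_ofReal (Real.exp_le_exp.mpr ?_)⟩
    rw [latNorm_eq_norm]
    simp only [PiLp.inner_apply, RCLike.inner_apply, conj_trivial, mul_comm (ξ _ : ℝ)] at hδy
    simp only [neg_mul, Finset.sum_neg_distrib]
    linarith
  · exact hv (fun i => -y i) (by simpa [EuclideanSpace.real_norm_eq] using hsσ y hy)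

/-- Let `d ≥ 2`, `0 < δ < σ`. If `v : ℤ^d → [0,∞]` satisfies
`sup_{|y|<σ} Σ_ξ e^{-2y·ξ} v(ξ) ≤ M²`, then `Σ_ξ e^{2δ|ξ|} v(ξ) ≤ C_δ M²`,
with `C_δ` independent of `v` and `M`. -/
theorem statement3 (d : ℕ) (hd : 2 ≤ d) (σ δ : ℝ) (hσ : 0 < σ) (hδ : 0 < δ)
    (hδσ : δ < σ) :
    ∃ C : ℝ, 0 < C ∧ ∀ (v : (Fin d → ℤ) → ℝ≥0∞) (M : ℝ),
      (∀ y : Fin d → ℝ, Real.sqrt (∑ i, (y i) ^ 2) < σ →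
        (∑' ξ : Fin d → ℤ,
            ENNReal.ofReal (Real.exp (-2 * ∑ i, y i * (ξ i : ℝ))) * v ξ)
          ≤ ENNReal.ofReal (M ^ 2)) →
      (∑' ξ : Fin d → ℤ, ENNReal.ofReal (Real.exp (2 * δ * latNorm ξ)) * v ξ)
        ≤ ENNReal.ofReal C * ENNReal.ofReal (M ^ 2) :=
  statement3_general d σ δ hσ hδσ
end

section
/- (Hörmander bilinear convolution estimate.) Let s₁, s₂, s₃ be real numbers with s₁+s₂ ≥ 0, s₃ ≤ min{s₁, s₂}, and s₃ < s₁+s₂ − d/2. Define F(ξ,ζ) = ⟨ξ⟩^{s₃} / (⟨ξ−ζ⟩^{s₁} ⟨ζ⟩^{s₂}), and for compactly supported f, g : Z^d → C set T_F(f,g)(ξ) = Σ_{ζ∈Z^d} F(ξ,ζ) f(ξ−ζ) g(ζ). Then there exists C > 0 such that ‖T_F(f,g)‖_{ℓ²(Z^d)} ≤ C ‖f‖_{ℓ²(Z^d)} ‖g‖_{ℓ²(Z^d)}. -/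
/-!
The three brackets `⟨ξ - ζ⟩, ⟨ζ⟩, ⟨ξ⟩` satisfy `x² ≤ 2y² + 2z²`, so the two largest of them are
comparable. Letting the smallest one absorb all the decay, the conditions on `s₁, s₂, s₃` give
`F(ξ, ζ) ≲ ⟨ξ - ζ⟩^{-σ} + ⟨ζ⟩^{-σ} + ⟨ξ⟩^{-σ}` with `σ = s₁ + s₂ - s₃ > d/2`, and `⟨·⟩^{-σ}` is
square-summable on `ℤ^d` (compare with `∏ᵢ (1 + ξᵢ²)^{-σ/d}`). For the first two terms,
Cauchy–Schwarz in `ζ` bounds `|T(f,g)(ξ)|²` by a multiple of `∑_ζ |f(ξ - ζ)|² |g(ζ)|²`, which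
sums over `ξ` to `‖f‖² ‖g‖²`; for the third, `∑_ζ |f(ξ - ζ) g(ζ)| ≤ ‖f‖ ‖g‖` and the factor
`⟨ξ⟩^{-σ}` is square-summable in `ξ`.
-/

open scoped BigOperators

/-- Japanese bracket `⟨ξ⟩ = (1+|ξ|²)^{1/2}` of a lattice point. -/
noncomputable def latJap {d : ℕ} (ξ : Fin d → ℤ) : ℝ :=
  Real.sqrt (1 + ∑ i, ((ξ i : ℝ)) ^ 2)

/-- The Hörmander kernel `F(ξ,ζ) = ⟨ξ⟩^{s₃}/(⟨ξ-ζ⟩^{s₁}⟨ζ⟩^{s₂})`. -/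
noncomputable def hormF {d : ℕ} (s₁ s₂ s₃ : ℝ) (ξ ζ : Fin d → ℤ) : ℝ :=
  (latJap ξ) ^ s₃ / ((latJap (ξ - ζ)) ^ s₁ * (latJap ζ) ^ s₂)

lemma sum_comp_equiv_le_tsum {ι α : Type*} {u : α → ℝ} (hu0 : ∀ x, 0 ≤ u x) (hu : Summable u)
    (e : ι ≃ α) (s : Finset ι) : ∑ i ∈ s, u (e i) ≤ ∑' x, u x :=
  calc ∑ i ∈ s, u (e i) ≤ ∑' i, u (e i) :=
        (hu.comp_injective e.injective).sum_le_tsum s fun _ _ => hu0 _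
    _ = ∑' x, u x := e.tsum_eq u

section Bilinear

variable {G R : Type*} [AddCommGroup G] [NormedRing R] {a : G → ℝ} {K : G → G → R} {f g : G → R}

lemma norm_sum_kernel_mul_sq_le (ha : Summable (a · ^ 2))
    (hK : ∀ ξ ζ, ‖K ξ ζ‖ ≤ a (ξ - ζ) + a ζ + a ξ)
    (hf : Summable (‖f ·‖ ^ 2)) (hg : Summable (‖g ·‖ ^ 2)) (T : Finset G) (ξ : G) :
    ‖∑ ζ ∈ T, K ξ ζ * f (ξ - ζ) * g ζ‖ ^ 2
      ≤ 8 * (∑' x, a x ^ 2) * ∑ ζ ∈ T, ‖f (ξ - ζ)‖ ^ 2 * ‖g ζ‖ ^ 2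
        + 2 * a ξ ^ 2 * ((∑' x, ‖f x‖ ^ 2) * ∑' x, ‖g x‖ ^ 2) := by
  set A := ∑' x, a x ^ 2
  set P := ∑ ζ ∈ T, (a (ξ - ζ) + a ζ) * (‖f (ξ - ζ)‖ * ‖g ζ‖)
  set Q := ∑ ζ ∈ T, ‖f (ξ - ζ)‖ * ‖g ζ‖
  have hnorm : ‖∑ ζ ∈ T, K ξ ζ * f (ξ - ζ) * g ζ‖ ≤ P + a ξ * Q := by
    rw [Finset.mul_sum, ← Finset.sum_add_distrib]
    refine (norm_sum_le _ _).trans (Finset.sum_le_sum fun ζ _ => ?_)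
    calc ‖K ξ ζ * f (ξ - ζ) * g ζ‖ ≤ ‖K ξ ζ‖ * ‖f (ξ - ζ)‖ * ‖g ζ‖ := norm_mul₃_le
      _ ≤ (a (ξ - ζ) + a ζ + a ξ) * ‖f (ξ - ζ)‖ * ‖g ζ‖ := by gcongr; exact hK ξ ζ
      _ = _ := by ring
  have hweight : ∑ ζ ∈ T, (a (ξ - ζ) + a ζ) ^ 2 ≤ 4 * A := by
    calc ∑ ζ ∈ T, (a (ξ - ζ) + a ζ) ^ 2
        ≤ 2 * ∑ ζ ∈ T, a (Equiv.subLeft ξ ζ) ^ 2 + 2 * ∑ ζ ∈ T, a ζ ^ 2 := by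
          rw [Finset.mul_sum, Finset.mul_sum, ← Finset.sum_add_distrib]
          exact Finset.sum_le_sum fun ζ _ => by
            rw [Equiv.subLeft_apply]
            nlinarith [sq_nonneg (a (ξ - ζ) - a ζ)]
      _ ≤ 2 * A + 2 * A := by
          gcongr
          · exact sum_comp_equiv_le_tsum (fun x => sq_nonneg (a x)) ha _ T
          · exact ha.sum_le_tsum T fun _ _ => sq_nonneg _
      _ = 4 * A := by ring
  have hP : P ^ 2 ≤ 4 * A * ∑ ζ ∈ T, ‖f (ξ - ζ)‖ ^ 2 * ‖g ζ‖ ^ 2 := by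
    refine (Finset.sum_mul_sq_le_sq_mul_sq T _ _).trans ?_
    simp_rw [mul_pow]
    gcongr
  have hQ : Q ^ 2 ≤ (∑' x, ‖f x‖ ^ 2) * ∑' x, ‖g x‖ ^ 2 := by
    refine (Finset.sum_mul_sq_le_sq_mul_sq T _ _).trans ?_
    gcongr
    · exact sum_comp_equiv_le_tsum (fun x => sq_nonneg ‖f x‖) hf (Equiv.subLeft ξ) T
    · exact hg.sum_le_tsum T fun _ _ => sq_nonneg _
  calc ‖∑ ζ ∈ T, K ξ ζ * f (ξ - ζ) * g ζ‖ ^ 2 ≤ (P + a ξ * Q) ^ 2 := by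
        gcongr
    _ ≤ 2 * P ^ 2 + 2 * a ξ ^ 2 * Q ^ 2 := by nlinarith [sq_nonneg (P - a ξ * Q)]
    _ ≤ _ := by nlinarith [sq_nonneg (a ξ)]

theorem sum_norm_sum_kernel_mul_sq_le (ha : Summable (a · ^ 2))
    (hK : ∀ ξ ζ, ‖K ξ ζ‖ ≤ a (ξ - ζ) + a ζ + a ξ)
    (hf : Summable (‖f ·‖ ^ 2)) (hg : Summable (‖g ·‖ ^ 2)) (Ω T : Finset G) :
    ∑ ξ ∈ Ω, ‖∑ ζ ∈ T, K ξ ζ * f (ξ - ζ) * g ζ‖ ^ 2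
      ≤ 10 * (∑' x, a x ^ 2) * (∑' x, ‖f x‖ ^ 2) * ∑' x, ‖g x‖ ^ 2 := by
  set A := ∑' x, a x ^ 2
  set Nf := ∑' x, ‖f x‖ ^ 2
  set Ng := ∑' x, ‖g x‖ ^ 2
  have hNf : 0 ≤ Nf := tsum_nonneg fun _ => sq_nonneg _
  have hNg : 0 ≤ Ng := tsum_nonneg fun _ => sq_nonneg _
  have hA : 0 ≤ A := tsum_nonneg fun _ => sq_nonneg _
  have hdiag : ∑ ξ ∈ Ω, ∑ ζ ∈ T, ‖f (ξ - ζ)‖ ^ 2 * ‖g ζ‖ ^ 2 ≤ Nf * Ng := by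
    rw [Finset.sum_comm]
    calc ∑ ζ ∈ T, ∑ ξ ∈ Ω, ‖f (ξ - ζ)‖ ^ 2 * ‖g ζ‖ ^ 2
        = ∑ ζ ∈ T, (∑ ξ ∈ Ω, ‖f (Equiv.subRight ζ ξ)‖ ^ 2) * ‖g ζ‖ ^ 2 := by
          simp [Finset.sum_mul]
      _ ≤ ∑ ζ ∈ T, Nf * ‖g ζ‖ ^ 2 := by
          gcongr
          exact sum_comp_equiv_le_tsum (fun x => sq_nonneg ‖f x‖) hf _ Ω
      _ ≤ Nf * Ng := by
          rw [← Finset.mul_sum]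
          gcongr
          exact hg.sum_le_tsum T fun _ _ => sq_nonneg _
  have hdiag' : ∑ ξ ∈ Ω, a ξ ^ 2 ≤ A := ha.sum_le_tsum Ω fun _ _ => sq_nonneg _
  calc ∑ ξ ∈ Ω, ‖∑ ζ ∈ T, K ξ ζ * f (ξ - ζ) * g ζ‖ ^ 2
      ≤ ∑ ξ ∈ Ω, (8 * A * ∑ ζ ∈ T, ‖f (ξ - ζ)‖ ^ 2 * ‖g ζ‖ ^ 2 + 2 * a ξ ^ 2 * (Nf * Ng)) :=
        Finset.sum_le_sum fun ξ _ => norm_sum_kernel_mul_sq_le ha hK hf hg T ξ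
    _ = 8 * A * ∑ ξ ∈ Ω, ∑ ζ ∈ T, ‖f (ξ - ζ)‖ ^ 2 * ‖g ζ‖ ^ 2
          + 2 * (∑ ξ ∈ Ω, a ξ ^ 2) * (Nf * Ng) := by
        rw [Finset.sum_add_distrib, ← Finset.mul_sum, ← Finset.sum_mul, ← Finset.mul_sum]
    _ ≤ 8 * A * (Nf * Ng) + 2 * A * (Nf * Ng) := by gcongr
    _ = 10 * A * Nf * Ng := by ring

end Bilinear

lemma summable_prod_apply {ι κ : Type*} [Fintype ι] {w : κ → ℝ} (hw0 : ∀ k, 0 ≤ w k)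
    (hw : Summable w) : Summable fun x : ι → κ => ∏ i, w (x i) := by
  classical
  refine summable_of_sum_le (c := (∑' k, w k) ^ Fintype.card ι)
    (fun x => Finset.prod_nonneg fun i _ => hw0 _) fun Φ => ?_
  calc ∑ x ∈ Φ, ∏ i, w (x i)
      ≤ ∑ x ∈ Fintype.piFinset fun i => Φ.image (· i), ∏ i, w (x i) :=
        Finset.sum_le_sum_of_subset_of_nonneg
          (fun x hx => Fintype.mem_piFinset.2 fun i => Finset.mem_image_of_mem _ hx)
          fun x _ _ => Finset.prod_nonneg fun i _ => hw0 _
    _ = ∏ i, ∑ k ∈ Φ.image (· i), w k := (Finset.prod_univ_sum _ _).symm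
    _ ≤ ∏ _i : ι, ∑' k, w k :=
        Finset.prod_le_prod (fun i _ => Finset.sum_nonneg fun k _ => hw0 k)
          fun i _ => hw.sum_le_tsum _ fun k _ => hw0 k
    _ = (∑' k, w k) ^ Fintype.card ι := by rw [Finset.prod_const, Finset.card_univ]

lemma summable_one_add_sq_rpow_neg {q : ℝ} (hq : 1 < 2 * q) :
    Summable fun k : ℤ => (1 + (k : ℝ) ^ 2) ^ (-q) := by
  refine (Real.summable_abs_int_rpow hq).of_norm_bounded_eventually ?_
  filter_upwards [Filter.eventually_cofinite_ne 0] with k hk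
  have hk2 : 0 < (k : ℝ) ^ 2 := by have : (k : ℝ) ≠ 0 := Int.cast_ne_zero.2 hk; positivity
  rw [Real.norm_of_nonneg (by positivity), show -(2 * q) = 2 * -q by ring,
    Real.rpow_mul (abs_nonneg _), Real.rpow_two, sq_abs]
  exact Real.rpow_le_rpow_of_nonpos hk2 (by linarith) (by linarith)

namespace Real

lemma rpow_le_two_rpow_abs_mul_rpow {x y : ℝ} (hy : 0 < y) (hxy : x ≤ 2 * y) (hyx : y ≤ 2 * x)
    (t : ℝ) : x ^ t ≤ 2 ^ |t| * y ^ t := by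
  rcases le_total 0 t with ht | ht
  · rw [abs_of_nonneg ht, ← mul_rpow zero_le_two hy.le]
    exact rpow_le_rpow (by linarith) hxy ht
  · rw [abs_of_nonpos ht, rpow_neg zero_le_two, ← inv_rpow zero_le_two,
      ← mul_rpow (by norm_num) hy.le]
    exact rpow_le_rpow_of_nonpos (by positivity) (by linarith) ht

variable {a b c s₁ s₂ s₃ : ℝ}

lemma rpow_div_rpow_mul_rpow_le_of_denominator_min (ha : 0 < a) (hab : a ≤ b)
    (hbc : b ≤ 2 * c) (hcb : c ≤ 2 * b) (h32 : s₃ ≤ s₂) :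
    c ^ s₃ / (a ^ s₁ * b ^ s₂) ≤ 2 ^ |s₃| * a ^ (-(s₁ + s₂ - s₃)) := by
  have hb : 0 < b := ha.trans_le hab
  calc c ^ s₃ / (a ^ s₁ * b ^ s₂) ≤ 2 ^ |s₃| * b ^ s₃ / (a ^ s₁ * b ^ s₂) := by
        gcongr
        exact rpow_le_two_rpow_abs_mul_rpow hb hcb hbc s₃
    _ = 2 ^ |s₃| * (b ^ (s₃ - s₂) * a ^ (-s₁)) := by
        rw [rpow_sub hb, rpow_neg ha.le]
        field_simp
    _ ≤ 2 ^ |s₃| * (a ^ (s₃ - s₂) * a ^ (-s₁)) := by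
        have := rpow_le_rpow_of_nonpos ha hab (sub_nonpos.2 h32)
        gcongr
    _ = 2 ^ |s₃| * a ^ (-(s₁ + s₂ - s₃)) := by
        rw [← rpow_add ha]
        ring_nf

lemma rpow_div_rpow_mul_rpow_le_of_numerator_min (hc : 0 < c) (hcb : c ≤ b)
    (hab : a ≤ 2 * b) (hba : b ≤ 2 * a) (h12 : 0 ≤ s₁ + s₂) :
    c ^ s₃ / (a ^ s₁ * b ^ s₂) ≤ 2 ^ |s₁| * c ^ (-(s₁ + s₂ - s₃)) := by
  have hb : 0 < b := hc.trans_le hcb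
  have ha : 0 < a := by linarith
  calc c ^ s₃ / (a ^ s₁ * b ^ s₂) ≤ c ^ s₃ / (2 ^ (-|s₁|) * b ^ s₁ * b ^ s₂) := by
        gcongr
        rw [rpow_neg zero_le_two, inv_mul_le_iff₀ (by positivity)]
        exact rpow_le_two_rpow_abs_mul_rpow ha hba hab s₁
    _ = 2 ^ |s₁| * (c ^ s₃ / b ^ (s₁ + s₂)) := by
        rw [rpow_add hb, rpow_neg zero_le_two]
        field_simp
    _ ≤ 2 ^ |s₁| * (c ^ s₃ / c ^ (s₁ + s₂)) := by
        gcongr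
    _ = 2 ^ |s₁| * c ^ (-(s₁ + s₂ - s₃)) := by
        rw [div_eq_mul_inv, ← rpow_neg hc.le, ← rpow_add hc]
        ring_nf

lemma rpow_div_rpow_mul_rpow_le (ha : 0 < a) (hb : 0 < b) (hc : 0 < c)
    (ha2 : a ^ 2 ≤ 2 * b ^ 2 + 2 * c ^ 2) (hb2 : b ^ 2 ≤ 2 * a ^ 2 + 2 * c ^ 2)
    (hc2 : c ^ 2 ≤ 2 * a ^ 2 + 2 * b ^ 2)
    (h12 : 0 ≤ s₁ + s₂) (h31 : s₃ ≤ s₁) (h32 : s₃ ≤ s₂) :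
    c ^ s₃ / (a ^ s₁ * b ^ s₂) ≤ 2 ^ (|s₁| + |s₂| + |s₃|) *
      (a ^ (-(s₁ + s₂ - s₃)) + b ^ (-(s₁ + s₂ - s₃)) + c ^ (-(s₁ + s₂ - s₃))) := by
  have le_two_mul_of_sq_le {x y z : ℝ} (hx : 0 < x) (hz : 0 < z) (hxz : x ≤ z)
      (h : y ^ 2 ≤ 2 * x ^ 2 + 2 * z ^ 2) : y ≤ 2 * z := by
    nlinarith
  set σ := s₁ + s₂ - s₃
  set S := a ^ (-σ) + b ^ (-σ) + c ^ (-σ)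
  have ha' := (rpow_pos_of_pos ha (-σ)).le
  have hb' := (rpow_pos_of_pos hb (-σ)).le
  have hc' := (rpow_pos_of_pos hc (-σ)).le
  have := abs_nonneg s₁; have := abs_nonneg s₂; have := abs_nonneg s₃
  have weaken {t x : ℝ} (ht : |t| ≤ |s₁| + |s₂| + |s₃|) (hx : 0 ≤ x ^ (-σ)) (hxS : x ^ (-σ) ≤ S) :
      2 ^ |t| * x ^ (-σ) ≤ 2 ^ (|s₁| + |s₂| + |s₃|) * S :=
    mul_le_mul (rpow_le_rpow_of_exponent_le one_le_two ht) hxS hx (by positivity)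
  rcases le_or_gt c (min a b) with hc_min | hmin
  · obtain ⟨hca, hcb⟩ := le_min_iff.1 hc_min
    refine (rpow_div_rpow_mul_rpow_le_of_numerator_min hc hcb
      (le_two_mul_of_sq_le hc hb hcb (by linarith)) (le_two_mul_of_sq_le hc ha hca (by linarith))
      h12).trans (weaken (by linarith) hc' (by linarith))
  rcases le_total a b with hab | hba
  · have hac : a ≤ c := (min_eq_left hab ▸ hmin).le
    refine (rpow_div_rpow_mul_rpow_le_of_denominator_min ha hab (le_two_mul_of_sq_le ha hc hac hb2)
      (le_two_mul_of_sq_le ha hb hab hc2) h32).trans (weaken (by linarith) ha' (by linarith))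
  · have hbc : b ≤ c := (min_eq_right hba ▸ hmin).le
    rw [mul_comm]
    refine (rpow_div_rpow_mul_rpow_le_of_denominator_min hb hba (le_two_mul_of_sq_le hb hc hbc ha2)
      (le_two_mul_of_sq_le hb ha hba (by linarith)) h31).trans ?_
    rw [add_comm s₂]
    exact weaken (by linarith) hb' (by linarith)

end Real

lemma latJap_sq {d : ℕ} (ξ : Fin d → ℤ) : latJap ξ ^ 2 = 1 + ∑ i, ((ξ i : ℝ)) ^ 2 :=
  Real.sq_sqrt (by positivity)

lemma one_le_latJap {d : ℕ} (ξ : Fin d → ℤ) : 1 ≤ latJap ξ :=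
  Real.one_le_sqrt.2 (le_add_of_nonneg_right (by positivity))

lemma latJap_pos {d : ℕ} (ξ : Fin d → ℤ) : 0 < latJap ξ :=
  one_pos.trans_le (one_le_latJap ξ)

lemma latJap_neg {d : ℕ} (ξ : Fin d → ℤ) : latJap (-ξ) = latJap ξ := by
  simp [latJap]

lemma latJap_add_sq_le {d : ℕ} (x y : Fin d → ℤ) :
    latJap (x + y) ^ 2 ≤ 2 * latJap x ^ 2 + 2 * latJap y ^ 2 := by
  simp only [latJap_sq, Pi.add_apply, Int.cast_add]
  have : ∑ i, ((x i : ℝ) + y i) ^ 2 ≤ 2 * ∑ i, (x i : ℝ) ^ 2 + 2 * ∑ i, (y i : ℝ) ^ 2 := by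
    rw [Finset.mul_sum, Finset.mul_sum, ← Finset.sum_add_distrib]
    exact Finset.sum_le_sum fun i _ => by nlinarith [sq_nonneg ((x i : ℝ) - y i)]
  linarith

lemma summable_latJap_rpow_neg {d : ℕ} {p : ℝ} (hp : d < p) :
    Summable fun η : Fin d → ℤ => latJap η ^ (-p) := by
  rcases Nat.eq_zero_or_pos d with rfl | hd
  · exact .of_finite
  set q := p / (2 * d)
  have hd' : (0 : ℝ) < d := Nat.cast_pos.2 hd
  have hqp : 2 * q * d = p := by simp only [q]; field_simp
  have hq : 1 < 2 * q := by nlinarith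
  refine (summable_prod_apply (fun k => by positivity)
    (summable_one_add_sq_rpow_neg hq)).of_nonneg_of_le
    (fun η => (Real.rpow_pos_of_pos (latJap_pos η) _).le) fun η => ?_
  have hη := latJap_pos η
  calc latJap η ^ (-p) = ∏ _i : Fin d, (latJap η ^ 2) ^ (-q) := by
        rw [Finset.prod_const, Finset.card_univ, Fintype.card_fin, ← Real.rpow_natCast,
          ← Real.rpow_natCast, ← Real.rpow_mul hη.le, ← Real.rpow_mul (by positivity), ← hqp]
        push_cast
        ring_nf
    _ ≤ ∏ i, (1 + (η i : ℝ) ^ 2) ^ (-q) := by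
        refine Finset.prod_le_prod (fun i _ => by positivity) fun i _ =>
          Real.rpow_le_rpow_of_nonpos (by positivity) ?_ (by linarith)
        rw [latJap_sq]
        gcongr
        exact Finset.single_le_sum (f := fun j => ((η j : ℝ)) ^ 2) (fun j _ => sq_nonneg _)
          (Finset.mem_univ i)

lemma hormF_le {d : ℕ} {s₁ s₂ s₃ : ℝ} (h12 : 0 ≤ s₁ + s₂) (h31 : s₃ ≤ s₁) (h32 : s₃ ≤ s₂)
    (ξ ζ : Fin d → ℤ) :
    hormF s₁ s₂ s₃ ξ ζ ≤ 2 ^ (|s₁| + |s₂| + |s₃|) * (latJap (ξ - ζ) ^ (-(s₁ + s₂ - s₃))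
      + latJap ζ ^ (-(s₁ + s₂ - s₃)) + latJap ξ ^ (-(s₁ + s₂ - s₃))) := by
  have ha := latJap_add_sq_le ξ (-ζ)
  have hb := latJap_add_sq_le ξ (ζ - ξ)
  have hc := latJap_add_sq_le (ξ - ζ) ζ
  rw [← sub_eq_add_neg, latJap_neg] at ha
  rw [add_sub_cancel, ← neg_sub, latJap_neg] at hb
  rw [sub_add_cancel] at hc
  exact Real.rpow_div_rpow_mul_rpow_le (latJap_pos _) (latJap_pos _) (latJap_pos _)
    (by linarith) (by linarith) hc h12 h31 h32

/-- Hörmander bilinear convolution estimate on `ℤ^d`.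
If `s₁+s₂ ≥ 0`, `s₃ ≤ min{s₁,s₂}`, `s₃ < s₁+s₂-d/2`, then
`‖T_F(f,g)‖_{ℓ²} ≤ C ‖f‖_{ℓ²} ‖g‖_{ℓ²}` for compactly supported `f, g`. -/
theorem statement5 (d : ℕ) (s₁ s₂ s₃ : ℝ) (h12 : 0 ≤ s₁ + s₂)
    (h31 : s₃ ≤ s₁) (h32 : s₃ ≤ s₂) (h3 : s₃ < s₁ + s₂ - (d : ℝ) / 2) :
    ∃ C : ℝ, 0 < C ∧ ∀ f g : (Fin d → ℤ) → ℂ,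
      (Function.support f).Finite → (Function.support g).Finite →
      Real.sqrt (∑' ξ : Fin d → ℤ,
          ‖∑' ζ : Fin d → ℤ, (hormF s₁ s₂ s₃ ξ ζ : ℂ) * f (ξ - ζ) * g ζ‖ ^ 2)
        ≤ C * Real.sqrt (∑' ξ : Fin d → ℤ, ‖f ξ‖ ^ 2) *
            Real.sqrt (∑' ξ : Fin d → ℤ, ‖g ξ‖ ^ 2) := by
  set σ := s₁ + s₂ - s₃
  set a : (Fin d → ℤ) → ℝ := fun η => 2 ^ (|s₁| + |s₂| + |s₃|) * latJap η ^ (-σ)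
  have ha_pos (η : Fin d → ℤ) : 0 < a η := by have := latJap_pos η; positivity
  have ha : Summable (a · ^ 2) := by
    have := (summable_latJap_rpow_neg (p := 2 * σ) (by linarith)).mul_left
      (((2 : ℝ) ^ (|s₁| + |s₂| + |s₃|)) ^ 2)
    refine this.congr fun η => ?_
    rw [mul_pow, ← Real.rpow_natCast (latJap η ^ _), ← Real.rpow_mul (latJap_pos η).le]
    ring_nf
  have hK (ξ ζ : Fin d → ℤ) : ‖(hormF s₁ s₂ s₃ ξ ζ : ℂ)‖ ≤ a (ξ - ζ) + a ζ + a ξ := by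
    rw [Complex.norm_real, Real.norm_of_nonneg (by unfold hormF latJap; positivity)]
    exact (hormF_le h12 h31 h32 ξ ζ).trans_eq (by ring)
  have hA : 0 < ∑' η, a η ^ 2 := ha.tsum_pos (fun _ => sq_nonneg _) 0 (pow_pos (ha_pos 0) 2)
  refine ⟨√(10 * ∑' η, a η ^ 2), by positivity, fun f g hf hg => ?_⟩
  have hf2 : Summable (‖f ·‖ ^ 2) :=
    summable_of_hasFiniteSupport (hf.subset fun x hx hfx => hx (by simp [hfx]))
  have hg2 : Summable (‖g ·‖ ^ 2) :=
    summable_of_hasFiniteSupport (hg.subset fun x hx hgx => hx (by simp [hgx]))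
  have hinner (ξ : Fin d → ℤ) : ∑' ζ, (hormF s₁ s₂ s₃ ξ ζ : ℂ) * f (ξ - ζ) * g ζ
      = ∑ ζ ∈ hg.toFinset, (hormF s₁ s₂ s₃ ξ ζ : ℂ) * f (ξ - ζ) * g ζ :=
    tsum_eq_sum' fun ζ hζ => hg.mem_toFinset.2 fun hgζ => hζ (by simp [hgζ])
  rw [← Real.sqrt_mul (by positivity), ← Real.sqrt_mul (by positivity)]
  refine Real.sqrt_le_sqrt (tsum_le_of_sum_le' (by positivity) fun Ω => ?_)
  simp only [hinner]
  exact sum_norm_sum_kernel_mul_sq_le ha hK hf2 hg2 Ω _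
end

section
/- Let s₁, s₂, s₃ ∈ R with s₁+s₂ ≥ 0, s₃ ≤ min{s₁,s₂}, s₃ < s₁+s₂−d/2. Then there exists C > 0 such that for all σ ≥ 0 and all u₁ ∈ H^{σ,s₁}(T^d), u₂ ∈ H^{σ,s₂}(T^d), the product satisfies ‖u₁u₂‖_{H^{σ,s₃}} ≤ C ‖u₁‖_{H^{σ,s₁}} ‖u₂‖_{H^{σ,s₂}}. -/
open scoped ENNReal BigOperators
open scoped Classical

/-- Weight `e^{2σ|ξ|}⟨ξ⟩^{2s}` of the analytic Sobolev space `H^{σ,s}(T^d)`. -/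
noncomputable def hWeight {d : ℕ} (σ s : ℝ) (ξ : Fin d → ℤ) : ℝ≥0∞ :=
  ENNReal.ofReal (Real.exp (2 * σ * latNorm ξ) * (latJap ξ) ^ (2 * s))

/-- Squared `H^{σ,s}(T^d)` norm of a function given by its Fourier
coefficients `c : ℤ^d → ℂ`. -/
noncomputable def hNormSq {d : ℕ} (σ s : ℝ) (c : (Fin d → ℤ) → ℂ) : ℝ≥0∞ :=
  ∑' ξ, hWeight σ s ξ * (‖c ξ‖₊ : ℝ≥0∞) ^ 2

/-- `H^{σ,s}(T^d)` norm. -/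
noncomputable def hNorm {d : ℕ} (σ s : ℝ) (c : (Fin d → ℤ) → ℂ) : ℝ≥0∞ :=
  (hNormSq σ s c) ^ (1/2 : ℝ)

/-- Convolution of Fourier coefficients: this represents the pointwise
product of the corresponding functions on `T^d` (up to the fixed
normalization factor `(2π)^{-d}`, harmless for the estimates below). -/
noncomputable def conv {d : ℕ} (f g : (Fin d → ℤ) → ℂ) : (Fin d → ℤ) → ℂ :=
  fun ξ => ∑' ζ, f (ξ - ζ) * g ζ

namespace S8
variable {d : ℕ}

noncomputable def J {d : ℕ} (ξ : Fin d → ℤ) : ℝ≥0∞ := ENNReal.ofReal (latJap ξ)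

lemma sumsq_nonneg (ξ : Fin d → ℤ) : 0 ≤ ∑ i, ((ξ i : ℝ)) ^ 2 :=
  Finset.sum_nonneg fun _ _ => sq_nonneg _

lemma one_le_sqrt {x : ℝ} (hx : 1 ≤ x) : 1 ≤ Real.sqrt x :=
  calc (1:ℝ) = Real.sqrt 1 := by simp
  _ ≤ Real.sqrt x := Real.sqrt_le_sqrt hx

lemma one_le_latJap (ξ : Fin d → ℤ) : 1 ≤ latJap ξ :=
  one_le_sqrt (by linarith [sumsq_nonneg ξ])

lemma latJap_nonneg (ξ : Fin d → ℤ) : 0 ≤ latJap ξ := Real.sqrt_nonneg _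

lemma one_le_J (ξ : Fin d → ℤ) : 1 ≤ J ξ := by
  rw [J, show (1:ℝ≥0∞) = ENNReal.ofReal 1 by simp]
  exact ENNReal.ofReal_le_ofReal (one_le_latJap ξ)

lemma J_ne_zero (ξ : Fin d → ℤ) : J ξ ≠ 0 := fun h => by simpa [h] using one_le_J ξ
lemma J_ne_top (ξ : Fin d → ℤ) : J ξ ≠ ⊤ := ENNReal.ofReal_ne_top

lemma latNorm_nonneg (ξ : Fin d → ℤ) : 0 ≤ latNorm ξ := Real.sqrt_nonneg _

lemma latNorm_triangle (η ζ : Fin d → ℤ) : latNorm (η + ζ) ≤ latNorm η + latNorm ζ := by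
  have h : ∀ ξ : Fin d → ℤ,
      latNorm ξ = ‖(WithLp.equiv 2 (Fin d → ℝ)).symm (fun i => (ξ i : ℝ))‖ := by
    intro ξ
    rw [EuclideanSpace.norm_eq, latNorm]
    simp [sq_abs]
  rw [h, h, h]
  have : ((WithLp.equiv 2 (Fin d → ℝ)).symm (fun i => ((η + ζ) i : ℝ)))
      = (WithLp.equiv 2 (Fin d → ℝ)).symm (fun i => (η i : ℝ))
        + (WithLp.equiv 2 (Fin d → ℝ)).symm (fun i => (ζ i : ℝ)) := by
    ext i
    simp only [Pi.add_apply, Int.cast_add]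
    rfl
  rw [this]
  exact norm_add_le _ _

lemma latNorm_sq (ξ : Fin d → ℤ) : latNorm ξ ^ 2 = ∑ i, ((ξ i : ℝ)) ^ 2 :=
  Real.sq_sqrt (sumsq_nonneg ξ)

lemma latJap_eq (ξ : Fin d → ℤ) : latJap ξ = Real.sqrt (1 + latNorm ξ ^ 2) := by
  rw [latJap, latNorm_sq]

lemma sqrt_one_add_sq_add {a b : ℝ} (ha : 0 ≤ a) (hb : 0 ≤ b) :
    Real.sqrt (1 + (a + b) ^ 2) ≤ Real.sqrt (1 + a ^ 2) + Real.sqrt (1 + b ^ 2) := by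
  have hsa := Real.sq_sqrt (by positivity : (0:ℝ) ≤ 1 + a ^ 2)
  have hsb := Real.sq_sqrt (by positivity : (0:ℝ) ≤ 1 + b ^ 2)
  have hsa0 := Real.sqrt_nonneg (1 + a ^ 2)
  have hsb0 := Real.sqrt_nonneg (1 + b ^ 2)
  have hsa1 : a ≤ Real.sqrt (1 + a ^ 2) := by
    have h := Real.sqrt_le_sqrt (show a^2 ≤ 1 + a^2 by linarith)
    rwa [Real.sqrt_sq ha] at h
  have hsb1 : b ≤ Real.sqrt (1 + b ^ 2) := by
    have h := Real.sqrt_le_sqrt (show b^2 ≤ 1 + b^2 by linarith)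
    rwa [Real.sqrt_sq hb] at h
  have hab : a * b ≤ Real.sqrt (1 + a ^ 2) * Real.sqrt (1 + b ^ 2) :=
    mul_le_mul hsa1 hsb1 hb (by linarith)
  rw [show Real.sqrt (1 + a ^ 2) + Real.sqrt (1 + b ^ 2)
    = Real.sqrt ((Real.sqrt (1 + a ^ 2) + Real.sqrt (1 + b ^ 2))^2) by
      rw [Real.sqrt_sq (by linarith)]]
  apply Real.sqrt_le_sqrt
  nlinarith

lemma latJap_triangle (η ζ : Fin d → ℤ) : latJap (η + ζ) ≤ latJap η + latJap ζ := by
  rw [latJap_eq, latJap_eq, latJap_eq]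
  calc Real.sqrt (1 + latNorm (η + ζ) ^ 2)
      ≤ Real.sqrt (1 + (latNorm η + latNorm ζ) ^ 2) := by
        apply Real.sqrt_le_sqrt
        have h := latNorm_triangle η ζ
        nlinarith [latNorm_nonneg (η + ζ), latNorm_nonneg η, latNorm_nonneg ζ]
    _ ≤ _ := sqrt_one_add_sq_add (latNorm_nonneg η) (latNorm_nonneg ζ)

lemma J_triangle (η ζ : Fin d → ℤ) : J (η + ζ) ≤ J η + J ζ := by
  rw [J, J, J, ← ENNReal.ofReal_add (latJap_nonneg η) (latJap_nonneg ζ)]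
  exact ENNReal.ofReal_le_ofReal (latJap_triangle η ζ)

lemma J_neg (ζ : Fin d → ℤ) : J (-ζ) = J ζ := by
  have h : ∀ i : Fin d, (((-ζ) i : ℤ) : ℝ)^2 = ((ζ i : ℝ))^2 := by
    intro i; simp
  rw [J, J, latJap, latJap, Finset.sum_congr rfl fun i _ => h i]

lemma cmp1 {ξ ζ : Fin d → ℤ} (h : J ζ ≤ J (ξ - ζ)) : J ξ ≤ 2 * J (ξ - ζ) := by
  calc J ξ = J ((ξ - ζ) + ζ) := by rw [sub_add_cancel]
    _ ≤ J (ξ - ζ) + J ζ := J_triangle _ _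
    _ ≤ J (ξ - ζ) + J (ξ - ζ) := by exact add_le_add le_rfl h
    _ = 2 * J (ξ - ζ) := (two_mul _).symm

lemma cmp2 {ξ ζ x : Fin d → ℤ} (h : J ζ ≤ J x) (h2 : J ξ ≤ J x) : J (ξ - ζ) ≤ 2 * J x := by
  calc J (ξ - ζ) = J (ξ + (-ζ)) := by rw [sub_eq_add_neg]
    _ ≤ J ξ + J (-ζ) := J_triangle _ _
    _ = J ξ + J ζ := by rw [J_neg]
    _ ≤ J x + J x := add_le_add h2 h
    _ = 2 * J x := (two_mul _).symm

lemma rpow_le_rpow_neg {x y : ℝ≥0∞} {t : ℝ} (hxy : x ≤ y) (hx : x ≠ 0) (ht : t ≤ 0) :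
    y ^ t ≤ x ^ t := by
  have hnt : 0 ≤ -t := by linarith
  rw [show t = -(-t) by ring, ENNReal.rpow_neg y, ENNReal.rpow_neg x]
  exact ENNReal.inv_le_inv.mpr (ENNReal.rpow_le_rpow hxy hnt)

lemma Jpow_mul (x : Fin d → ℤ) (a b : ℝ) : J x ^ a * J x ^ b = J x ^ (a + b) :=
  (ENNReal.rpow_add a b (J_ne_zero x) (J_ne_top x)).symm

lemma Jpow_le_one {x : Fin d → ℤ} {t : ℝ} (ht : t ≤ 0) : J x ^ t ≤ 1 := by
  rcases eq_or_lt_of_le ht with h | h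
  · subst h; rw [ENNReal.rpow_zero]
  · exact ENNReal.rpow_le_one_of_one_le_of_neg (one_le_J x) h

lemma Jpow_exp_mono {x : Fin d → ℤ} {a b : ℝ} (h : a ≤ b) : J x ^ a ≤ J x ^ b :=
  ENNReal.rpow_le_rpow_of_exponent_le (one_le_J x) h

/-- the key summation-comparison lemma -/
lemma SL {r : ℝ} (hr : (d:ℝ)/2 < r) {p q : ℝ} (hq : 0 ≤ q) (hpq : p + q = r)
    {x y : Fin d → ℤ} (hxy : J x ≤ J y) :
    J x ^ (-(2*p)) * J y ^ (-(2*q)) ≤ J x ^ (-(r + (d:ℝ)/2)) := by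
  set τ : ℝ := r + (d:ℝ)/2 with hτ
  have hsplit : J x ^ (-(2*p)) = J x ^ (-τ) * J x ^ (τ - 2*p) := by
    rw [Jpow_mul]; congr 1; ring
  rw [hsplit]
  rcases le_or_gt 0 (τ - 2*p) with hcase | hcase
  · have h1 : J x ^ (τ - 2*p) ≤ J y ^ (τ - 2*p) := ENNReal.rpow_le_rpow hxy hcase
    have h2 : J y ^ (τ - 2*p) ≤ J y ^ (2*q) := by
      apply Jpow_exp_mono
      have hd : 0 ≤ (d:ℝ) := Nat.cast_nonneg d
      rw [hτ]
      linarith [hpq, hr]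
    calc J x ^ (-τ) * J x ^ (τ - 2*p) * J y ^ (-(2*q))
        ≤ J x ^ (-τ) * J y ^ (2*q) * J y ^ (-(2*q)) :=
          mul_le_mul' (mul_le_mul' le_rfl (h1.trans h2)) le_rfl
      _ = J x ^ (-τ) * (J y ^ (2*q) * J y ^ (-(2*q))) := by ring
      _ = J x ^ (-τ) := by rw [Jpow_mul]; simp
  · have h1 : J x ^ (τ - 2*p) ≤ 1 := Jpow_le_one (by linarith)
    have h2 : J y ^ (-(2*q)) ≤ 1 := Jpow_le_one (by linarith)
    calc J x ^ (-τ) * J x ^ (τ - 2*p) * J y ^ (-(2*q))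
        ≤ J x ^ (-τ) * 1 * 1 := mul_le_mul' (mul_le_mul' le_rfl h1) h2
      _ = J x ^ (-τ) := by simp



noncomputable def Kfun {d : ℕ} (s₁ s₂ s₃ : ℝ) (ξ ζ : Fin d → ℤ) : ℝ≥0∞ :=
  J ξ ^ s₃ * J (ξ - ζ) ^ (-s₁) * J ζ ^ (-s₂)

lemma two_ne_top' : (2:ℝ≥0∞) ≠ ⊤ := by simp

lemma pow2_move {x y : ℝ≥0∞} (hx : x ≤ 2 * y) (hy : y ≠ ⊤) {t : ℝ} (ht : 0 ≤ t) :
    x ^ t ≤ (2:ℝ≥0∞) ^ t * y ^ t := by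
  calc x^t ≤ (2*y)^t := ENNReal.rpow_le_rpow hx ht
  _ = 2^t * y^t := ENNReal.mul_rpow_of_ne_top two_ne_top' hy t

lemma two_rpow_mono {a b : ℝ} (h : a ≤ b) : (2:ℝ≥0∞)^a ≤ (2:ℝ≥0∞)^b :=
  ENNReal.rpow_le_rpow_of_exponent_le (by norm_num) h

lemma two_rpow_ne_top (a : ℝ) : (2:ℝ≥0∞)^a ≠ ⊤ := by
  intro h
  rcases ENNReal.rpow_eq_top_iff.mp h with ⟨h0, _⟩ | ⟨htop, _⟩
  · norm_num at h0
  · exact two_ne_top' htop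

lemma pointA {d : ℕ} (s₁ s₂ s₃ : ℝ) (h31 : s₃ ≤ s₁) :
    ∃ u v : ℝ, 0 ≤ u ∧ u + v = s₁ + s₂ - s₃ ∧ ∀ (ξ ζ : Fin d → ℤ),
      J ζ ≤ J (ξ - ζ) → J ζ ≤ J ξ →
      Kfun s₁ s₂ s₃ ξ ζ ≤ (2:ℝ≥0∞)^(|s₁|+|s₃|) * (J ξ ^ (-u) * J ζ ^ (-v)) := by
  rcases le_or_gt 0 s₃ with h3 | h3
  · -- s₃ ≥ 0 : u = 0, v = r
    refine ⟨0, s₁ + s₂ - s₃, le_rfl, by ring, fun ξ ζ h1 h2 => ?_⟩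
    have step1 : J ξ ^ s₃ ≤ (2:ℝ≥0∞)^s₃ * J (ξ - ζ) ^ s₃ :=
      pow2_move (cmp1 h1) (J_ne_top _) h3
    calc Kfun s₁ s₂ s₃ ξ ζ
        ≤ ((2:ℝ≥0∞)^s₃ * J (ξ - ζ) ^ s₃) * J (ξ - ζ) ^ (-s₁) * J ζ ^ (-s₂) := by
          exact mul_le_mul' (mul_le_mul' step1 le_rfl) le_rfl
      _ = (2:ℝ≥0∞)^s₃ * (J (ξ - ζ) ^ (s₃ + -s₁) * J ζ ^ (-s₂)) := by
          rw [mul_assoc, mul_assoc, ← mul_assoc (J (ξ-ζ)^s₃), Jpow_mul]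
      _ ≤ (2:ℝ≥0∞)^s₃ * (J ζ ^ (s₃ + -s₁) * J ζ ^ (-s₂)) := by
          exact mul_le_mul' le_rfl (mul_le_mul'
            (rpow_le_rpow_neg h1 (J_ne_zero ζ) (by linarith)) le_rfl)
      _ = (2:ℝ≥0∞)^s₃ * J ζ ^ (-(s₁ + s₂ - s₃)) := by
          rw [Jpow_mul]; congr 2; ring
      _ ≤ (2:ℝ≥0∞)^(|s₁|+|s₃|) * (J ξ ^ (-(0:ℝ)) * J ζ ^ (-(s₁ + s₂ - s₃))) := by
          rw [neg_zero, ENNReal.rpow_zero, one_mul]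
          exact mul_le_mul' (two_rpow_mono (by
            have := abs_nonneg s₁; have := le_abs_self s₃; linarith)) le_rfl
  · rcases le_or_gt 0 s₁ with h1c | h1c
    · -- s₃ < 0 ≤ s₁ : u = -s₃, v = s₁+s₂
      refine ⟨-s₃, s₁ + s₂, by linarith, by ring, fun ξ ζ h1 h2 => ?_⟩
      calc Kfun s₁ s₂ s₃ ξ ζ
          ≤ J ξ ^ s₃ * J ζ ^ (-s₁) * J ζ ^ (-s₂) := by
            exact mul_le_mul' (mul_le_mul' le_rfl
              (rpow_le_rpow_neg h1 (J_ne_zero ζ) (by linarith))) le_rfl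
        _ = J ξ ^ (-(-s₃)) * J ζ ^ (-(s₁ + s₂)) := by
            rw [mul_assoc, Jpow_mul]; congr 2 <;> ring
        _ ≤ (2:ℝ≥0∞)^(|s₁|+|s₃|) * (J ξ ^ (-(-s₃)) * J ζ ^ (-(s₁ + s₂))) := by
          rw [show ((2:ℝ≥0∞)^(|s₁|+|s₃|)) * (J ξ ^ (-(-s₃)) * J ζ ^ (-(s₁ + s₂)))
            = ((2:ℝ≥0∞)^(|s₁|+|s₃|)) * (J ξ ^ (-(-s₃)) * J ζ ^ (-(s₁ + s₂))) from rfl]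
          have hone : (1:ℝ≥0∞) ≤ (2:ℝ≥0∞)^(|s₁|+|s₃|) := by
            rw [show (1:ℝ≥0∞) = (2:ℝ≥0∞)^(0:ℝ) by simp]
            exact two_rpow_mono (by positivity)
          calc J ξ ^ (-(-s₃)) * J ζ ^ (-(s₁ + s₂))
              = 1 * (J ξ ^ (-(-s₃)) * J ζ ^ (-(s₁ + s₂))) := (one_mul _).symm
            _ ≤ _ := mul_le_mul' hone le_rfl
    · -- s₃ ≤ s₁ < 0 : u = s₁ - s₃, v = s₂
      refine ⟨s₁ - s₃, s₂, by linarith, by ring, fun ξ ζ h1 h2 => ?_⟩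
      have step1 : J (ξ - ζ) ^ (-s₁) ≤ (2:ℝ≥0∞)^(-s₁) * J ξ ^ (-s₁) :=
        pow2_move (cmp2 h2 le_rfl) (J_ne_top _) (by linarith)
      calc Kfun s₁ s₂ s₃ ξ ζ
          ≤ J ξ ^ s₃ * ((2:ℝ≥0∞)^(-s₁) * J ξ ^ (-s₁)) * J ζ ^ (-s₂) :=
            mul_le_mul' (mul_le_mul' le_rfl step1) le_rfl
        _ = (2:ℝ≥0∞)^(-s₁) * (J ξ ^ (-(s₁ - s₃)) * J ζ ^ (-s₂)) := by
            rw [show J ξ ^ s₃ * ((2:ℝ≥0∞)^(-s₁) * J ξ ^ (-s₁)) * J ζ ^ (-s₂)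
              = (2:ℝ≥0∞)^(-s₁) * ((J ξ ^ s₃ * J ξ ^ (-s₁)) * J ζ ^ (-s₂)) by ring,
              Jpow_mul]
            congr 3
            ring
        _ ≤ (2:ℝ≥0∞)^(|s₁|+|s₃|) * (J ξ ^ (-(s₁ - s₃)) * J ζ ^ (-s₂)) := by
            refine mul_le_mul' (two_rpow_mono ?_) le_rfl
            have := neg_abs_le s₁; have := abs_nonneg s₃; linarith


lemma sq_rpow (x : ℝ≥0∞) (t : ℝ) : (x ^ t) ^ (2:ℕ) = x ^ (2*t) := by
  rw [← ENNReal.rpow_natCast (x ^ t) 2, ← ENNReal.rpow_mul, mul_comm]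
  norm_num

lemma regionA_schur {d : ℕ} (s₁ s₂ s₃ : ℝ) (h31 : s₃ ≤ s₁)
    (hr : (d:ℝ)/2 < s₁ + s₂ - s₃) (ξ : Fin d → ℤ) :
    ∑' ζ : Fin d → ℤ,
        (if J ζ ≤ J (ξ - ζ) ∧ J ζ ≤ J ξ then Kfun s₁ s₂ s₃ ξ ζ else 0) ^ (2:ℕ)
      ≤ (2:ℝ≥0∞)^(2*(|s₁|+|s₃|))
          * ∑' x : Fin d → ℤ, J x ^ (-(s₁ + s₂ - s₃ + (d:ℝ)/2)) := by
  obtain ⟨u, v, hu, huv, hpt⟩ := pointA (d := d) s₁ s₂ s₃ h31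
  have key : ∀ ζ : Fin d → ℤ,
      (if J ζ ≤ J (ξ - ζ) ∧ J ζ ≤ J ξ then Kfun s₁ s₂ s₃ ξ ζ else 0) ^ (2:ℕ)
        ≤ (2:ℝ≥0∞)^(2*(|s₁|+|s₃|)) * J ζ ^ (-(s₁ + s₂ - s₃ + (d:ℝ)/2)) := by
    intro ζ
    by_cases h : J ζ ≤ J (ξ - ζ) ∧ J ζ ≤ J ξ
    · rw [if_pos h]
      have hb := hpt ξ ζ h.1 h.2
      calc (Kfun s₁ s₂ s₃ ξ ζ) ^ (2:ℕ)
          ≤ ((2:ℝ≥0∞)^(|s₁|+|s₃|) * (J ξ ^ (-u) * J ζ ^ (-v))) ^ (2:ℕ) :=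
            pow_le_pow_left₀ (zero_le) hb 2
        _ = (2:ℝ≥0∞)^(2*(|s₁|+|s₃|)) * (J ζ ^ (-(2*v)) * J ξ ^ (-(2*u))) := by
            rw [mul_pow, mul_pow, sq_rpow, sq_rpow, sq_rpow,
              show (2:ℝ)*(-u) = -(2*u) by ring, show (2:ℝ)*(-v) = -(2*v) by ring,
              mul_comm (J ξ ^ (-(2*u))) (J ζ ^ (-(2*v)))]
        _ ≤ (2:ℝ≥0∞)^(2*(|s₁|+|s₃|)) * J ζ ^ (-(s₁ + s₂ - s₃ + (d:ℝ)/2)) :=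
            mul_le_mul' le_rfl (SL hr hu (by linarith) h.2)
    · rw [if_neg h]
      simp
  calc ∑' ζ : Fin d → ℤ,
      (if J ζ ≤ J (ξ - ζ) ∧ J ζ ≤ J ξ then Kfun s₁ s₂ s₃ ξ ζ else 0) ^ (2:ℕ)
      ≤ ∑' ζ : Fin d → ℤ,
          (2:ℝ≥0∞)^(2*(|s₁|+|s₃|)) * J ζ ^ (-(s₁ + s₂ - s₃ + (d:ℝ)/2)) :=
        ENNReal.tsum_le_tsum key
    _ = _ := ENNReal.tsum_mul_left

lemma regionXi_pos_point {d : ℕ} (s₁ s₂ s₃ : ℝ) (h01 : 0 ≤ s₁) (h02 : 0 ≤ s₂)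
    (ξ ζ : Fin d → ℤ) :
    (if J ξ ≤ J (ξ - ζ) ∧ J ξ ≤ J ζ then Kfun s₁ s₂ s₃ ξ ζ else 0)
      ≤ J ξ ^ (-(s₁ + s₂ - s₃)) := by
  by_cases h : J ξ ≤ J (ξ - ζ) ∧ J ξ ≤ J ζ
  · rw [if_pos h]
    calc Kfun s₁ s₂ s₃ ξ ζ
        ≤ J ξ ^ s₃ * J ξ ^ (-s₁) * J ξ ^ (-s₂) :=
          mul_le_mul' (mul_le_mul' le_rfl
            (rpow_le_rpow_neg h.1 (J_ne_zero ξ) (by linarith)))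
            (rpow_le_rpow_neg h.2 (J_ne_zero ξ) (by linarith))
      _ = J ξ ^ (-(s₁ + s₂ - s₃)) := by
          rw [Jpow_mul, Jpow_mul]; congr 1; ring
  · rw [if_neg h]; exact zero_le

lemma regionXi_neg_schur {d : ℕ} (s₁ s₂ s₃ : ℝ) (h1n : s₁ < 0) (h12 : 0 ≤ s₁ + s₂)
    (hr : (d:ℝ)/2 < s₁ + s₂ - s₃) (ζ : Fin d → ℤ) :
    ∑' ξ : Fin d → ℤ,
        (if J ξ ≤ J (ξ - ζ) ∧ J ξ ≤ J ζ then Kfun s₁ s₂ s₃ ξ ζ else 0) ^ (2:ℕ)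
      ≤ (2:ℝ≥0∞)^(2*(|s₁|+|s₃|))
          * ∑' x : Fin d → ℤ, J x ^ (-(s₁ + s₂ - s₃ + (d:ℝ)/2)) := by
  have key : ∀ ξ : Fin d → ℤ,
      (if J ξ ≤ J (ξ - ζ) ∧ J ξ ≤ J ζ then Kfun s₁ s₂ s₃ ξ ζ else 0) ^ (2:ℕ)
        ≤ (2:ℝ≥0∞)^(2*(|s₁|+|s₃|)) * J ξ ^ (-(s₁ + s₂ - s₃ + (d:ℝ)/2)) := by
    intro ξ
    by_cases h : J ξ ≤ J (ξ - ζ) ∧ J ξ ≤ J ζ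
    · rw [if_pos h]
      have step1 : J (ξ - ζ) ^ (-s₁) ≤ (2:ℝ≥0∞)^(-s₁) * J ζ ^ (-s₁) :=
        pow2_move (cmp2 le_rfl h.2) (J_ne_top _) (by linarith)
      have hb : Kfun s₁ s₂ s₃ ξ ζ
          ≤ (2:ℝ≥0∞)^(-s₁) * (J ξ ^ (-(-s₃)) * J ζ ^ (-(s₁ + s₂))) := by
        calc Kfun s₁ s₂ s₃ ξ ζ
            ≤ J ξ ^ s₃ * ((2:ℝ≥0∞)^(-s₁) * J ζ ^ (-s₁)) * J ζ ^ (-s₂) :=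
              mul_le_mul' (mul_le_mul' le_rfl step1) le_rfl
          _ = (2:ℝ≥0∞)^(-s₁) * (J ξ ^ s₃ * (J ζ ^ (-s₁) * J ζ ^ (-s₂))) := by ring
          _ = (2:ℝ≥0∞)^(-s₁) * (J ξ ^ (-(-s₃)) * J ζ ^ (-(s₁ + s₂))) := by
              rw [Jpow_mul]
              congr 2
              · ring
              · ring
      calc (Kfun s₁ s₂ s₃ ξ ζ) ^ (2:ℕ)
          ≤ ((2:ℝ≥0∞)^(-s₁) * (J ξ ^ (-(-s₃)) * J ζ ^ (-(s₁ + s₂)))) ^ (2:ℕ) :=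
            pow_le_pow_left₀ (zero_le) hb 2
        _ = (2:ℝ≥0∞)^(2*(-s₁)) * (J ξ ^ (-(2*(-s₃))) * J ζ ^ (-(2*(s₁ + s₂)))) := by
            rw [mul_pow, mul_pow, sq_rpow, sq_rpow, sq_rpow,
              show (2:ℝ)*(-(-s₃)) = -(2*(-s₃)) by ring,
              show (2:ℝ)*(-(s₁+s₂)) = -(2*(s₁+s₂)) by ring]
        _ ≤ (2:ℝ≥0∞)^(2*(|s₁|+|s₃|)) * J ξ ^ (-(s₁ + s₂ - s₃ + (d:ℝ)/2)) := by
            refine mul_le_mul' (two_rpow_mono ?_) (SL hr h12 (by ring) h.2)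
            have h1 := neg_abs_le s₁
            have h2 := abs_nonneg s₃
            linarith
    · rw [if_neg h]
      simp
  calc ∑' ξ : Fin d → ℤ,
      (if J ξ ≤ J (ξ - ζ) ∧ J ξ ≤ J ζ then Kfun s₁ s₂ s₃ ξ ζ else 0) ^ (2:ℕ)
      ≤ ∑' ξ : Fin d → ℤ,
          (2:ℝ≥0∞)^(2*(|s₁|+|s₃|)) * J ξ ^ (-(s₁ + s₂ - s₃ + (d:ℝ)/2)) :=
        ENNReal.tsum_le_tsum key
    _ = _ := ENNReal.tsum_mul_left


-- === summability ===
noncomputable def Jz (a : ℤ) : ℝ≥0∞ := ENNReal.ofReal (Real.sqrt (1 + (a:ℝ)^2))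

lemma sum1 {u : ℝ} (hu : 1 < u) : ∑' a : ℤ, Jz a ^ (-u) < ⊤ := by
  have hu0 : 0 < u := by linarith
  have hsq : ∀ a : ℤ, (0:ℝ) < 1 + (a:ℝ)^2 := fun a => by positivity
  set f : ℤ → ℝ := fun a => (1 + (a:ℝ)^2) ^ (-u/2) with hf
  have hfnn : ∀ a, 0 ≤ f a := fun a => Real.rpow_nonneg (hsq a).le _
  have h1 : Summable (fun a : ℤ => |(a:ℝ)| ^ (-u)) := Real.summable_abs_int_rpow hu
  have h2 : Summable (fun a : ℤ => if a = 0 then (1:ℝ) else 0) := by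
    apply summable_of_finite_support
    apply Set.Finite.subset (Set.finite_singleton (0:ℤ))
    intro a ha
    by_contra h
    simp only [Set.mem_singleton_iff] at h
    simp [Function.mem_support, h] at ha
  have hs : Summable f := by
    refine Summable.of_nonneg_of_le hfnn (fun a => ?_) (h1.add h2)
    show f a ≤ |(a:ℝ)| ^ (-u) + if a = 0 then (1:ℝ) else 0
    by_cases h : a = 0
    · subst h
      have : f 0 = 1 := by norm_num [hf]
      simp [this, Real.rpow_nonneg]
    · have ha2 : ((a:ℝ)^2) ≤ 1 + (a:ℝ)^2 := by linarith
      have ha0 : (0:ℝ) < (a:ℝ)^2 := by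
        have : (a:ℝ) ≠ 0 := by exact_mod_cast h
        positivity
      have hb : f a ≤ ((a:ℝ)^2) ^ (-u/2) :=
        Real.rpow_le_rpow_of_nonpos ha0 ha2 (by linarith)
      have heq : ((a:ℝ)^2) ^ (-u/2) = |(a:ℝ)| ^ (-u) := by
        rw [← sq_abs, ← Real.rpow_natCast |(a:ℝ)| 2, ← Real.rpow_mul (abs_nonneg _)]
        norm_num
        ring_nf
      simp only [h, if_false, add_zero]
      rw [← heq]; exact hb
  have hpt : ∀ a : ℤ, Jz a ^ (-u) = ENNReal.ofReal (f a) := by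
    intro a
    rw [Jz, ENNReal.ofReal_rpow_of_pos (Real.sqrt_pos.mpr (hsq a)),
      Real.sqrt_eq_rpow, ← Real.rpow_mul (hsq a).le]
    norm_num [hf]
    ring_nf
  calc ∑' a : ℤ, Jz a ^ (-u) = ∑' a : ℤ, ENNReal.ofReal (f a) := by
        exact tsum_congr hpt
    _ = ENNReal.ofReal (∑' a, f a) := (ENNReal.ofReal_tsum_of_nonneg hfnn hs).symm
    _ < ⊤ := ENNReal.ofReal_lt_top



lemma one_le_Jz (a : ℤ) : 1 ≤ Jz a := by
  rw [Jz, show (1:ℝ≥0∞) = ENNReal.ofReal 1 by simp]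
  exact ENNReal.ofReal_le_ofReal (one_le_sqrt (by nlinarith [sq_nonneg ((a:ℝ))]))

lemma Jz_ne_zero (a : ℤ) : Jz a ≠ 0 := fun h => by simpa [h] using one_le_Jz a

lemma Jz_le_Jcons {d : ℕ} (a : ℤ) (ξ : Fin d → ℤ) : Jz a ≤ J (Fin.cons a ξ) := by
  rw [Jz, J]
  apply ENNReal.ofReal_le_ofReal
  rw [latJap]
  apply Real.sqrt_le_sqrt
  rw [Fin.sum_univ_succ]
  simp only [Fin.cons_zero, Fin.cons_succ]
  linarith [sumsq_nonneg ξ]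

lemma J_le_Jcons {d : ℕ} (a : ℤ) (ξ : Fin d → ℤ) : J ξ ≤ J (Fin.cons a ξ) := by
  rw [J, J]
  apply ENNReal.ofReal_le_ofReal
  rw [latJap, latJap]
  apply Real.sqrt_le_sqrt
  rw [Fin.sum_univ_succ]
  simp only [Fin.cons_zero, Fin.cons_succ]
  nlinarith [sq_nonneg ((a:ℝ))]

lemma sumJ : ∀ (d : ℕ) (t : ℝ), (d:ℝ) < t → ∑' ξ : Fin d → ℤ, J ξ ^ (-t) < ⊤ := by
  intro d
  induction d with
  | zero =>
      intro t ht
      have : ∑' ξ : Fin 0 → ℤ, J ξ ^ (-t) = J (default : Fin 0 → ℤ) ^ (-t) := tsum_eq_single _ (by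
        intro b hb
        exact absurd (Subsingleton.elim b default) hb)
      rw [this]
      have hJ : J (default : Fin 0 → ℤ) = 1 := by
        rw [J, latJap]
        norm_num
      rw [hJ, ENNReal.one_rpow]
      exact ENNReal.one_lt_top
  | succ d ih =>
      intro t ht
      set δ : ℝ := (t - (d+1))/2 with hδ
      have hδ0 : 0 < δ := by
        rw [hδ]
        push_cast at ht ⊢
        linarith
      have hu : 1 < 1 + δ := by linarith
      have hv : (d:ℝ) < d + δ := by linarith
      have huv : -t = -(1+δ) + -((d:ℝ)+δ) := by rw [hδ]; push_cast; ring
      have key : ∀ p : ℤ × (Fin d → ℤ),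
          J (Fin.cons p.1 p.2) ^ (-t) ≤ Jz p.1 ^ (-(1+δ)) * J p.2 ^ (-((d:ℝ)+δ)) := by
        rintro ⟨a, ξ⟩
        rw [huv, ENNReal.rpow_add _ _ (J_ne_zero _) (J_ne_top _)]
        exact mul_le_mul' (rpow_le_rpow_neg (Jz_le_Jcons a ξ) (Jz_ne_zero a) (by linarith))
          (rpow_le_rpow_neg (J_le_Jcons a ξ) (J_ne_zero ξ) (by have : (0:ℝ) ≤ d := Nat.cast_nonneg d; linarith))
      have e := Fin.consEquiv (fun _ : Fin (d+1) => ℤ)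
      calc ∑' ξ' : Fin (d+1) → ℤ, J ξ' ^ (-t)
          = ∑' p : ℤ × (Fin d → ℤ), J ((Fin.consEquiv (fun _ : Fin (d+1) => ℤ)) p) ^ (-t) :=
            ((Fin.consEquiv (fun _ : Fin (d+1) => ℤ)).tsum_eq (fun ξ' => J ξ' ^ (-t))).symm
        _ ≤ ∑' p : ℤ × (Fin d → ℤ), Jz p.1 ^ (-(1+δ)) * J p.2 ^ (-((d:ℝ)+δ)) := by
            apply ENNReal.tsum_le_tsum
            intro p
            exact key p
        _ = ∑' a : ℤ, ∑' ξ : Fin d → ℤ, Jz a ^ (-(1+δ)) * J ξ ^ (-((d:ℝ)+δ)) :=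
            ENNReal.tsum_prod (f := fun a ξ => Jz a ^ (-(1+δ)) * J ξ ^ (-((d:ℝ)+δ)))
        _ = (∑' a : ℤ, Jz a ^ (-(1+δ))) * (∑' ξ : Fin d → ℤ, J ξ ^ (-((d:ℝ)+δ))) := by
            simp_rw [ENNReal.tsum_mul_left]
            rw [ENNReal.tsum_mul_right]
        _ < ⊤ := ENNReal.mul_lt_top (sum1 hu) (ih _ hv)

-- === machines ===

variable {d : ℕ}
local notation "Λ" => Fin d → ℤ

/-- Cauchy–Schwarz for `ℝ≥0∞`-valued tsums. -/
lemma tsum_mul_sq_le {α : Type*} [Countable α] (f g : α → ℝ≥0∞) :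
    (∑' i, f i * g i) ^ (2:ℕ) ≤ (∑' i, f i ^ (2:ℕ)) * (∑' i, g i ^ (2:ℕ)) := by
  classical
  letI : MeasurableSpace α := ⊤
  haveI : MeasurableSingletonClass α := ⟨fun _ => trivial⟩
  have hmf : Measurable f := fun s _ => trivial
  have hmg : Measurable g := fun s _ => trivial
  have hpq : Real.HolderConjugate 2 2 := Real.HolderConjugate.two_two
  have h := ENNReal.lintegral_mul_le_Lp_mul_Lq (MeasureTheory.Measure.count (α := α)) hpq
      hmf.aemeasurable hmg.aemeasurable
  rw [MeasureTheory.lintegral_count, MeasureTheory.lintegral_count,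
    MeasureTheory.lintegral_count] at h
  have h2 : (∑' i, f i * g i) ^ (2:ℕ)
      ≤ ((∑' a, f a ^ (2:ℝ)) ^ (1/2 : ℝ) * (∑' a, g a ^ (2:ℝ)) ^ (1/2 : ℝ)) ^ (2:ℕ) :=
    pow_le_pow_left₀ (zero_le) h 2
  calc (∑' i, f i * g i) ^ (2:ℕ) ≤ _ := h2
    _ = (∑' a, f a ^ (2:ℝ)) * (∑' a, g a ^ (2:ℝ)) := by
        rw [mul_pow, ← ENNReal.rpow_natCast ((∑' a, f a ^ (2:ℝ)) ^ (1/2:ℝ)) 2,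
          ← ENNReal.rpow_natCast ((∑' a, g a ^ (2:ℝ)) ^ (1/2:ℝ)) 2,
          ← ENNReal.rpow_mul, ← ENNReal.rpow_mul]
        norm_num
    _ = (∑' i, f i ^ (2:ℕ)) * (∑' i, g i ^ (2:ℕ)) := by
        simp [ENNReal.rpow_two]

lemma shift_tsum_sq (F : Λ → ℝ≥0∞) (ζ : Λ) :
    ∑' ξ : Λ, F (ξ - ζ) ^ (2:ℕ) = ∑' η : Λ, F η ^ (2:ℕ) :=
  (Equiv.subRight ζ).tsum_eq (fun η => F η ^ (2:ℕ))

lemma shift_tsum_sq' (F : Λ → ℝ≥0∞) (ξ : Λ) :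
    ∑' ζ : Λ, F (ξ - ζ) ^ (2:ℕ) = ∑' η : Λ, F η ^ (2:ℕ) :=
  (Equiv.subLeft ξ).tsum_eq (fun η => F η ^ (2:ℕ))

lemma machine1 (K : Λ → Λ → ℝ≥0∞) (F G : Λ → ℝ≥0∞) (A : ℝ≥0∞)
    (hA : ∀ ξ : Λ, ∑' ζ : Λ, (K ξ ζ) ^ (2:ℕ) ≤ A) :
    ∑' ξ : Λ, (∑' ζ : Λ, K ξ ζ * F (ξ - ζ) * G ζ) ^ (2:ℕ)
      ≤ A * (∑' η : Λ, F η ^ (2:ℕ)) * (∑' ζ : Λ, G ζ ^ (2:ℕ)) := by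
  have step : ∀ ξ : Λ, (∑' ζ : Λ, K ξ ζ * F (ξ - ζ) * G ζ) ^ (2:ℕ)
      ≤ A * ∑' ζ : Λ, F (ξ - ζ) ^ (2:ℕ) * G ζ ^ (2:ℕ) := by
    intro ξ
    calc (∑' ζ : Λ, K ξ ζ * F (ξ - ζ) * G ζ) ^ (2:ℕ)
        = (∑' ζ : Λ, K ξ ζ * (F (ξ - ζ) * G ζ)) ^ (2:ℕ) := by
          congr 1; exact tsum_congr fun ζ => by ring
      _ ≤ (∑' ζ : Λ, K ξ ζ ^ (2:ℕ)) * (∑' ζ : Λ, (F (ξ - ζ) * G ζ) ^ (2:ℕ)) :=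
          tsum_mul_sq_le _ _
      _ ≤ A * ∑' ζ : Λ, F (ξ - ζ) ^ (2:ℕ) * G ζ ^ (2:ℕ) := by
          refine mul_le_mul' (hA ξ) (le_of_eq (tsum_congr fun ζ => ?_))
          ring
  calc ∑' ξ : Λ, (∑' ζ : Λ, K ξ ζ * F (ξ - ζ) * G ζ) ^ (2:ℕ)
      ≤ ∑' ξ : Λ, A * ∑' ζ : Λ, F (ξ - ζ) ^ (2:ℕ) * G ζ ^ (2:ℕ) :=
        ENNReal.tsum_le_tsum step
    _ = A * ∑' ξ : Λ, ∑' ζ : Λ, F (ξ - ζ) ^ (2:ℕ) * G ζ ^ (2:ℕ) := ENNReal.tsum_mul_left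
    _ = A * ∑' ζ : Λ, ∑' ξ : Λ, F (ξ - ζ) ^ (2:ℕ) * G ζ ^ (2:ℕ) := by rw [ENNReal.tsum_comm]
    _ = A * ∑' ζ : Λ, (∑' ξ : Λ, F (ξ - ζ) ^ (2:ℕ)) * G ζ ^ (2:ℕ) := by
        congr 1; exact tsum_congr fun ζ => ENNReal.tsum_mul_right
    _ = A * ∑' ζ : Λ, (∑' η : Λ, F η ^ (2:ℕ)) * G ζ ^ (2:ℕ) := by
        congr 1; exact tsum_congr fun ζ => by rw [shift_tsum_sq]
    _ = A * (∑' η : Λ, F η ^ (2:ℕ)) * (∑' ζ : Λ, G ζ ^ (2:ℕ)) := by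
        rw [ENNReal.tsum_mul_left, mul_assoc]

lemma machine3 (K : Λ → Λ → ℝ≥0∞) (F G : Λ → ℝ≥0∞) (A : ℝ≥0∞)
    (hA : ∀ ζ : Λ, ∑' ξ : Λ, (K ξ ζ) ^ (2:ℕ) ≤ A) :
    ∑' ξ : Λ, (∑' ζ : Λ, K ξ ζ * F (ξ - ζ) * G ζ) ^ (2:ℕ)
      ≤ A * (∑' η : Λ, F η ^ (2:ℕ)) * (∑' ζ : Λ, G ζ ^ (2:ℕ)) := by
  have step : ∀ ξ : Λ, (∑' ζ : Λ, K ξ ζ * F (ξ - ζ) * G ζ) ^ (2:ℕ)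
      ≤ (∑' ζ : Λ, K ξ ζ ^ (2:ℕ) * G ζ ^ (2:ℕ)) * (∑' η : Λ, F η ^ (2:ℕ)) := by
    intro ξ
    calc (∑' ζ : Λ, K ξ ζ * F (ξ - ζ) * G ζ) ^ (2:ℕ)
        = (∑' ζ : Λ, (K ξ ζ * G ζ) * F (ξ - ζ)) ^ (2:ℕ) := by
          congr 1; exact tsum_congr fun ζ => by ring
      _ ≤ (∑' ζ : Λ, (K ξ ζ * G ζ) ^ (2:ℕ)) * (∑' ζ : Λ, F (ξ - ζ) ^ (2:ℕ)) :=
          tsum_mul_sq_le _ _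
      _ = (∑' ζ : Λ, K ξ ζ ^ (2:ℕ) * G ζ ^ (2:ℕ)) * (∑' η : Λ, F η ^ (2:ℕ)) := by
          rw [shift_tsum_sq']
          congr 1; exact tsum_congr fun ζ => by ring
  calc ∑' ξ : Λ, (∑' ζ : Λ, K ξ ζ * F (ξ - ζ) * G ζ) ^ (2:ℕ)
      ≤ ∑' ξ : Λ, (∑' ζ : Λ, K ξ ζ ^ (2:ℕ) * G ζ ^ (2:ℕ)) * (∑' η : Λ, F η ^ (2:ℕ)) :=
        ENNReal.tsum_le_tsum step
    _ = (∑' ξ : Λ, ∑' ζ : Λ, K ξ ζ ^ (2:ℕ) * G ζ ^ (2:ℕ)) * (∑' η : Λ, F η ^ (2:ℕ)) :=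
        ENNReal.tsum_mul_right
    _ = (∑' ζ : Λ, ∑' ξ : Λ, K ξ ζ ^ (2:ℕ) * G ζ ^ (2:ℕ)) * (∑' η : Λ, F η ^ (2:ℕ)) := by
        rw [ENNReal.tsum_comm]
    _ = (∑' ζ : Λ, (∑' ξ : Λ, K ξ ζ ^ (2:ℕ)) * G ζ ^ (2:ℕ)) * (∑' η : Λ, F η ^ (2:ℕ)) := by
        congr 1; exact tsum_congr fun ζ => ENNReal.tsum_mul_right
    _ ≤ (∑' ζ : Λ, A * G ζ ^ (2:ℕ)) * (∑' η : Λ, F η ^ (2:ℕ)) := by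
        refine mul_le_mul' (ENNReal.tsum_le_tsum fun ζ => ?_) le_rfl
        exact mul_le_mul' (hA ζ) le_rfl
    _ = A * (∑' η : Λ, F η ^ (2:ℕ)) * (∑' ζ : Λ, G ζ ^ (2:ℕ)) := by
        rw [ENNReal.tsum_mul_left]
        ring

lemma machine4 (K : Λ → Λ → ℝ≥0∞) (F G M : Λ → ℝ≥0∞) (A : ℝ≥0∞)
    (hK : ∀ ξ ζ : Λ, K ξ ζ ≤ M ξ) (hM : ∑' ξ : Λ, M ξ ^ (2:ℕ) ≤ A) :
    ∑' ξ : Λ, (∑' ζ : Λ, K ξ ζ * F (ξ - ζ) * G ζ) ^ (2:ℕ)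
      ≤ A * (∑' η : Λ, F η ^ (2:ℕ)) * (∑' ζ : Λ, G ζ ^ (2:ℕ)) := by
  have step : ∀ ξ : Λ, (∑' ζ : Λ, K ξ ζ * F (ξ - ζ) * G ζ) ^ (2:ℕ)
      ≤ M ξ ^ (2:ℕ) * ((∑' η : Λ, F η ^ (2:ℕ)) * (∑' ζ : Λ, G ζ ^ (2:ℕ))) := by
    intro ξ
    calc (∑' ζ : Λ, K ξ ζ * F (ξ - ζ) * G ζ) ^ (2:ℕ)
        ≤ (∑' ζ : Λ, M ξ * (F (ξ - ζ) * G ζ)) ^ (2:ℕ) := by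
          apply pow_le_pow_left₀ (zero_le)
          refine ENNReal.tsum_le_tsum fun ζ => ?_
          rw [mul_assoc]
          exact mul_le_mul' (hK ξ ζ) le_rfl
      _ = (M ξ * ∑' ζ : Λ, F (ξ - ζ) * G ζ) ^ (2:ℕ) := by rw [ENNReal.tsum_mul_left]
      _ = M ξ ^ (2:ℕ) * (∑' ζ : Λ, F (ξ - ζ) * G ζ) ^ (2:ℕ) := mul_pow _ _ _
      _ ≤ M ξ ^ (2:ℕ) * ((∑' ζ : Λ, F (ξ - ζ) ^ (2:ℕ)) * (∑' ζ : Λ, G ζ ^ (2:ℕ))) :=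
          mul_le_mul' le_rfl (tsum_mul_sq_le _ _)
      _ = M ξ ^ (2:ℕ) * ((∑' η : Λ, F η ^ (2:ℕ)) * (∑' ζ : Λ, G ζ ^ (2:ℕ))) := by
          rw [shift_tsum_sq']
  calc ∑' ξ : Λ, (∑' ζ : Λ, K ξ ζ * F (ξ - ζ) * G ζ) ^ (2:ℕ)
      ≤ ∑' ξ : Λ, M ξ ^ (2:ℕ) * ((∑' η : Λ, F η ^ (2:ℕ)) * (∑' ζ : Λ, G ζ ^ (2:ℕ))) :=
        ENNReal.tsum_le_tsum step
    _ = (∑' ξ : Λ, M ξ ^ (2:ℕ)) * ((∑' η : Λ, F η ^ (2:ℕ)) * (∑' ζ : Λ, G ζ ^ (2:ℕ))) :=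
        ENNReal.tsum_mul_right
    _ ≤ A * ((∑' η : Λ, F η ^ (2:ℕ)) * (∑' ζ : Λ, G ζ ^ (2:ℕ))) := mul_le_mul' hM le_rfl
    _ = A * (∑' η : Λ, F η ^ (2:ℕ)) * (∑' ζ : Λ, G ζ ^ (2:ℕ)) := by rw [mul_assoc]



-- === cover and assembly helpers ===

lemma le_add3_left (a x y : ℝ≥0∞) : a ≤ a + x + y :=
  (self_le_add_right a x).trans (self_le_add_right _ y)

lemma le_add3_mid (a x y : ℝ≥0∞) : a ≤ x + a + y :=
  (self_le_add_left a x).trans (self_le_add_right _ y)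

lemma le_add3_right (a x y : ℝ≥0∞) : a ≤ x + y + a :=
  self_le_add_left a (x + y)

lemma sq_add3_le (x y z : ℝ≥0∞) :
    (x + y + z) ^ (2:ℕ) ≤ 9 * (x ^ (2:ℕ) + y ^ (2:ℕ) + z ^ (2:ℕ)) := by
  set m := x ⊔ y ⊔ z with hm
  have hxm : x ≤ m := le_sup_of_le_left le_sup_left
  have hym : y ≤ m := le_sup_of_le_left le_sup_right
  have hzm : z ≤ m := le_sup_right
  have h1 : x + y + z ≤ 3 * m := by
    calc x + y + z ≤ m + m + m := add_le_add (add_le_add hxm hym) hzm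
      _ = 3 * m := by ring
  have hmeq : m = x ∨ m = y ∨ m = z := by
    rcases max_cases (x ⊔ y) z with ⟨h, _⟩ | ⟨h, _⟩
    · rcases max_cases x y with ⟨h', _⟩ | ⟨h', _⟩
      · left; rw [hm, h, h']
      · right; left; rw [hm, h, h']
    · right; right; rw [hm, h]
  have h2 : m ^ (2:ℕ) ≤ x ^ (2:ℕ) + y ^ (2:ℕ) + z ^ (2:ℕ) := by
    rcases hmeq with h | h | h
    · rw [h]; exact le_add3_left _ _ _
    · rw [h]; exact le_add3_mid _ _ _
    · rw [h]; exact le_add3_right _ _ _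
  calc (x + y + z) ^ (2:ℕ) ≤ (3 * m) ^ (2:ℕ) := pow_le_pow_left₀ (zero_le) h1 2
    _ = 9 * m ^ (2:ℕ) := by rw [mul_pow]; norm_num
    _ ≤ 9 * (x ^ (2:ℕ) + y ^ (2:ℕ) + z ^ (2:ℕ)) := mul_le_mul' le_rfl h2

lemma swap_inner {d : ℕ} (Kf : (Fin d → ℤ) → (Fin d → ℤ) → ℝ≥0∞)
    (F G : (Fin d → ℤ) → ℝ≥0∞) (ξ : Fin d → ℤ) :
    ∑' ζ, Kf ξ ζ * F (ξ - ζ) * G ζ = ∑' ζ, Kf ξ (ξ - ζ) * G (ξ - ζ) * F ζ := by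
  rw [← (Equiv.subLeft ξ).tsum_eq (fun ζ => Kf ξ ζ * F (ξ - ζ) * G ζ)]
  apply tsum_congr
  intro ζ
  have h : (Equiv.subLeft ξ) ζ = ξ - ζ := rfl
  rw [h, sub_sub_cancel]
  ring

lemma Kfun_swap {d : ℕ} (s₁ s₂ s₃ : ℝ) (ξ ζ : Fin d → ℤ) :
    Kfun s₁ s₂ s₃ ξ (ξ - ζ) = Kfun s₂ s₁ s₃ ξ ζ := by
  rw [Kfun, Kfun, sub_sub_cancel]
  ring

lemma cover {d : ℕ} (s₁ s₂ s₃ : ℝ) (ξ ζ : Fin d → ℤ) :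
    Kfun s₁ s₂ s₃ ξ ζ
      ≤ (if J ζ ≤ J (ξ - ζ) ∧ J ζ ≤ J ξ then Kfun s₁ s₂ s₃ ξ ζ else 0)
        + (if J (ξ - ζ) ≤ J ζ ∧ J (ξ - ζ) ≤ J ξ then Kfun s₁ s₂ s₃ ξ ζ else 0)
        + (if J ξ ≤ J (ξ - ζ) ∧ J ξ ≤ J ζ then Kfun s₁ s₂ s₃ ξ ζ else 0) := by
  rcases le_total (J ζ) (J (ξ - ζ)) with h1 | h1
  · rcases le_total (J ζ) (J ξ) with h2 | h2
    · calc Kfun s₁ s₂ s₃ ξ ζ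
          = (if J ζ ≤ J (ξ - ζ) ∧ J ζ ≤ J ξ then Kfun s₁ s₂ s₃ ξ ζ else 0) :=
            (if_pos ⟨h1, h2⟩).symm
        _ ≤ _ := le_add3_left _ _ _
    · calc Kfun s₁ s₂ s₃ ξ ζ
          = (if J ξ ≤ J (ξ - ζ) ∧ J ξ ≤ J ζ then Kfun s₁ s₂ s₃ ξ ζ else 0) :=
            (if_pos ⟨h2.trans h1, h2⟩).symm
        _ ≤ _ := le_add3_right _ _ _
  · rcases le_total (J (ξ - ζ)) (J ξ) with h2 | h2
    · calc Kfun s₁ s₂ s₃ ξ ζ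
          = (if J (ξ - ζ) ≤ J ζ ∧ J (ξ - ζ) ≤ J ξ then Kfun s₁ s₂ s₃ ξ ζ else 0) :=
            (if_pos ⟨h1, h2⟩).symm
        _ ≤ _ := le_add3_mid _ _ _
    · calc Kfun s₁ s₂ s₃ ξ ζ
          = (if J ξ ≤ J (ξ - ζ) ∧ J ξ ≤ J ζ then Kfun s₁ s₂ s₃ ξ ζ else 0) :=
            (if_pos ⟨h2, h2.trans h1⟩).symm
        _ ≤ _ := le_add3_right _ _ _


-- === the core bilinear estimate ===

lemma core {d : ℕ} (s₁ s₂ s₃ : ℝ) (h12 : 0 ≤ s₁ + s₂) (h31 : s₃ ≤ s₁) (h32 : s₃ ≤ s₂)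
    (hr : (d:ℝ)/2 < s₁ + s₂ - s₃) (F G : (Fin d → ℤ) → ℝ≥0∞) :
    ∑' ξ : Fin d → ℤ, (∑' ζ : Fin d → ℤ, Kfun s₁ s₂ s₃ ξ ζ * F (ξ - ζ) * G ζ) ^ (2:ℕ)
      ≤ 27 * (2:ℝ≥0∞)^(2*(|s₁|+|s₂|+|s₃|))
          * (∑' x : Fin d → ℤ, J x ^ (-(s₁ + s₂ - s₃ + (d:ℝ)/2)))
          * (∑' η : Fin d → ℤ, F η ^ (2:ℕ)) * (∑' ζ : Fin d → ℤ, G ζ ^ (2:ℕ)) := by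
  set SS := ∑' x : Fin d → ℤ, J x ^ (-(s₁ + s₂ - s₃ + (d:ℝ)/2)) with hSS
  set NF := ∑' η : Fin d → ℤ, F η ^ (2:ℕ) with hNF
  set NG := ∑' ζ : Fin d → ℤ, G ζ ^ (2:ℕ) with hNG
  set cB := (2:ℝ≥0∞)^(2*(|s₁|+|s₂|+|s₃|)) with hcB
  set KA : (Fin d → ℤ) → (Fin d → ℤ) → ℝ≥0∞ :=
    fun ξ ζ => if J ζ ≤ J (ξ - ζ) ∧ J ζ ≤ J ξ then Kfun s₁ s₂ s₃ ξ ζ else 0 with hKA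
  set KB : (Fin d → ℤ) → (Fin d → ℤ) → ℝ≥0∞ :=
    fun ξ ζ => if J (ξ - ζ) ≤ J ζ ∧ J (ξ - ζ) ≤ J ξ then Kfun s₁ s₂ s₃ ξ ζ else 0 with hKB
  set KX : (Fin d → ℤ) → (Fin d → ℤ) → ℝ≥0∞ :=
    fun ξ ζ => if J ξ ≤ J (ξ - ζ) ∧ J ξ ≤ J ζ then Kfun s₁ s₂ s₃ ξ ζ else 0 with hKX
  have habs2 := abs_nonneg s₂
  have habs1 := abs_nonneg s₁
  have habs3 := abs_nonneg s₃
  have hc13 : (2:ℝ≥0∞)^(2*(|s₁|+|s₃|)) ≤ cB := two_rpow_mono (by linarith)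
  have hc23 : (2:ℝ≥0∞)^(2*(|s₂|+|s₃|)) ≤ cB := two_rpow_mono (by linarith)
  have hcB1 : (1:ℝ≥0∞) ≤ cB := by
    rw [show (1:ℝ≥0∞) = (2:ℝ≥0∞)^(0:ℝ) by simp, hcB]
    exact two_rpow_mono (by linarith)
  have hrB : (d:ℝ)/2 < s₂ + s₁ - s₃ := by linarith
  have hSSB : (∑' x : Fin d → ℤ, J x ^ (-(s₂ + s₁ - s₃ + (d:ℝ)/2))) = SS := by
    rw [hSS]
    exact tsum_congr fun x => by rw [show -(s₂ + s₁ - s₃ + (d:ℝ)/2) = -(s₁ + s₂ - s₃ + (d:ℝ)/2) by ring]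
  -- region A
  have TA : ∑' ξ : Fin d → ℤ, (∑' ζ : Fin d → ℤ, KA ξ ζ * F (ξ - ζ) * G ζ) ^ (2:ℕ)
      ≤ (cB * SS) * NF * NG := by
    apply machine1
    intro ξ
    calc ∑' ζ : Fin d → ℤ, KA ξ ζ ^ (2:ℕ)
        ≤ (2:ℝ≥0∞)^(2*(|s₁|+|s₃|)) * SS := regionA_schur s₁ s₂ s₃ h31 hr ξ
      _ ≤ cB * SS := mul_le_mul' hc13 le_rfl
  -- region B via swapping
  have TBeq : ∀ ξ : Fin d → ℤ, (∑' ζ : Fin d → ℤ, KB ξ ζ * F (ξ - ζ) * G ζ)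
      = ∑' ζ : Fin d → ℤ,
          (if J ζ ≤ J (ξ - ζ) ∧ J ζ ≤ J ξ then Kfun s₂ s₁ s₃ ξ ζ else 0)
            * G (ξ - ζ) * F ζ := by
    intro ξ
    rw [swap_inner KB F G ξ]
    apply tsum_congr
    intro ζ
    congr 2
    rw [hKB]
    simp only []
    rw [sub_sub_cancel, Kfun_swap]
  have TB : ∑' ξ : Fin d → ℤ, (∑' ζ : Fin d → ℤ, KB ξ ζ * F (ξ - ζ) * G ζ) ^ (2:ℕ)
      ≤ (cB * SS) * NF * NG := by
    calc ∑' ξ : Fin d → ℤ, (∑' ζ : Fin d → ℤ, KB ξ ζ * F (ξ - ζ) * G ζ) ^ (2:ℕ)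
        = ∑' ξ : Fin d → ℤ, (∑' ζ : Fin d → ℤ,
            (if J ζ ≤ J (ξ - ζ) ∧ J ζ ≤ J ξ then Kfun s₂ s₁ s₃ ξ ζ else 0)
              * G (ξ - ζ) * F ζ) ^ (2:ℕ) := tsum_congr fun ξ => by rw [TBeq ξ]
      _ ≤ (cB * SS) * NG * NF := by
          apply machine1
          intro ξ
          calc ∑' ζ : Fin d → ℤ,
              (if J ζ ≤ J (ξ - ζ) ∧ J ζ ≤ J ξ then Kfun s₂ s₁ s₃ ξ ζ else 0) ^ (2:ℕ)
              ≤ (2:ℝ≥0∞)^(2*(|s₂|+|s₃|))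
                  * ∑' x : Fin d → ℤ, J x ^ (-(s₂ + s₁ - s₃ + (d:ℝ)/2)) :=
                regionA_schur s₂ s₁ s₃ h32 hrB ξ
            _ = (2:ℝ≥0∞)^(2*(|s₂|+|s₃|)) * SS := by rw [hSSB]
            _ ≤ cB * SS := mul_le_mul' hc23 le_rfl
      _ = (cB * SS) * NF * NG := by ring
  -- region Ξ
  have TX : ∑' ξ : Fin d → ℤ, (∑' ζ : Fin d → ℤ, KX ξ ζ * F (ξ - ζ) * G ζ) ^ (2:ℕ)
      ≤ (cB * SS) * NF * NG := by
    by_cases h01 : 0 ≤ s₁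
    · by_cases h02 : 0 ≤ s₂
      · -- both nonnegative: machine 4
        apply machine4 KX F G (fun ξ => J ξ ^ (-(s₁ + s₂ - s₃))) (cB * SS)
        · intro ξ ζ
          exact regionXi_pos_point s₁ s₂ s₃ h01 h02 ξ ζ
        · calc ∑' ξ : Fin d → ℤ, (J ξ ^ (-(s₁ + s₂ - s₃))) ^ (2:ℕ)
              = ∑' ξ : Fin d → ℤ, J ξ ^ (2 * -(s₁ + s₂ - s₃)) :=
                tsum_congr fun ξ => sq_rpow _ _
            _ ≤ ∑' ξ : Fin d → ℤ, J ξ ^ (-(s₁ + s₂ - s₃ + (d:ℝ)/2)) :=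
                ENNReal.tsum_le_tsum fun ξ => Jpow_exp_mono (by linarith)
            _ = SS := by rw [hSS]
            _ ≤ cB * SS := by
                calc SS = 1 * SS := (one_mul _).symm
                  _ ≤ cB * SS := mul_le_mul' hcB1 le_rfl
      · -- s₂ < 0 : swap then Schur in ξ
        push_neg at h02
        have TXeq : ∀ ξ : Fin d → ℤ, (∑' ζ : Fin d → ℤ, KX ξ ζ * F (ξ - ζ) * G ζ)
            = ∑' ζ : Fin d → ℤ,
                (if J ξ ≤ J (ξ - ζ) ∧ J ξ ≤ J ζ then Kfun s₂ s₁ s₃ ξ ζ else 0)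
                  * G (ξ - ζ) * F ζ := by
          intro ξ
          rw [swap_inner KX F G ξ]
          apply tsum_congr
          intro ζ
          congr 2
          rw [hKX]
          simp only []
          rw [sub_sub_cancel, Kfun_swap]
          exact if_congr and_comm rfl rfl
        calc ∑' ξ : Fin d → ℤ, (∑' ζ : Fin d → ℤ, KX ξ ζ * F (ξ - ζ) * G ζ) ^ (2:ℕ)
            = ∑' ξ : Fin d → ℤ, (∑' ζ : Fin d → ℤ,
                (if J ξ ≤ J (ξ - ζ) ∧ J ξ ≤ J ζ then Kfun s₂ s₁ s₃ ξ ζ else 0)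
                  * G (ξ - ζ) * F ζ) ^ (2:ℕ) := tsum_congr fun ξ => by rw [TXeq ξ]
          _ ≤ (cB * SS) * NG * NF := by
              apply machine3
              intro ζ
              calc ∑' ξ : Fin d → ℤ,
                  (if J ξ ≤ J (ξ - ζ) ∧ J ξ ≤ J ζ then Kfun s₂ s₁ s₃ ξ ζ else 0) ^ (2:ℕ)
                  ≤ (2:ℝ≥0∞)^(2*(|s₂|+|s₃|))
                      * ∑' x : Fin d → ℤ, J x ^ (-(s₂ + s₁ - s₃ + (d:ℝ)/2)) :=
                    regionXi_neg_schur s₂ s₁ s₃ h02 (by linarith) hrB ζ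
                _ = (2:ℝ≥0∞)^(2*(|s₂|+|s₃|)) * SS := by rw [hSSB]
                _ ≤ cB * SS := mul_le_mul' hc23 le_rfl
          _ = (cB * SS) * NF * NG := by ring
    · -- s₁ < 0 : Schur in ξ
      push_neg at h01
      apply machine3
      intro ζ
      calc ∑' ξ : Fin d → ℤ, KX ξ ζ ^ (2:ℕ)
          ≤ (2:ℝ≥0∞)^(2*(|s₁|+|s₃|)) * SS := by
            rw [hSS]
            exact regionXi_neg_schur s₁ s₂ s₃ h01 h12 hr ζ
        _ ≤ cB * SS := mul_le_mul' hc13 le_rfl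
  -- combine
  have hinner : ∀ ξ : Fin d → ℤ,
      (∑' ζ : Fin d → ℤ, Kfun s₁ s₂ s₃ ξ ζ * F (ξ - ζ) * G ζ)
        ≤ (∑' ζ : Fin d → ℤ, KA ξ ζ * F (ξ - ζ) * G ζ)
          + (∑' ζ : Fin d → ℤ, KB ξ ζ * F (ξ - ζ) * G ζ)
          + (∑' ζ : Fin d → ℤ, KX ξ ζ * F (ξ - ζ) * G ζ) := by
    intro ξ
    rw [← ENNReal.tsum_add, ← ENNReal.tsum_add]
    apply ENNReal.tsum_le_tsum
    intro ζ
    calc Kfun s₁ s₂ s₃ ξ ζ * F (ξ - ζ) * G ζ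
        ≤ (KA ξ ζ + KB ξ ζ + KX ξ ζ) * F (ξ - ζ) * G ζ :=
          mul_le_mul' (mul_le_mul' (cover s₁ s₂ s₃ ξ ζ) le_rfl) le_rfl
      _ = KA ξ ζ * F (ξ - ζ) * G ζ + KB ξ ζ * F (ξ - ζ) * G ζ
          + KX ξ ζ * F (ξ - ζ) * G ζ := by ring
  calc ∑' ξ : Fin d → ℤ, (∑' ζ : Fin d → ℤ, Kfun s₁ s₂ s₃ ξ ζ * F (ξ - ζ) * G ζ) ^ (2:ℕ)
      ≤ ∑' ξ : Fin d → ℤ,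
          ((∑' ζ : Fin d → ℤ, KA ξ ζ * F (ξ - ζ) * G ζ)
            + (∑' ζ : Fin d → ℤ, KB ξ ζ * F (ξ - ζ) * G ζ)
            + (∑' ζ : Fin d → ℤ, KX ξ ζ * F (ξ - ζ) * G ζ)) ^ (2:ℕ) :=
        ENNReal.tsum_le_tsum fun ξ => pow_le_pow_left₀ (zero_le) (hinner ξ) 2
    _ ≤ ∑' ξ : Fin d → ℤ,
          9 * ((∑' ζ : Fin d → ℤ, KA ξ ζ * F (ξ - ζ) * G ζ) ^ (2:ℕ)
            + (∑' ζ : Fin d → ℤ, KB ξ ζ * F (ξ - ζ) * G ζ) ^ (2:ℕ)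
            + (∑' ζ : Fin d → ℤ, KX ξ ζ * F (ξ - ζ) * G ζ) ^ (2:ℕ)) :=
        ENNReal.tsum_le_tsum fun ξ => sq_add3_le _ _ _
    _ = 9 * ((∑' ξ : Fin d → ℤ, (∑' ζ : Fin d → ℤ, KA ξ ζ * F (ξ - ζ) * G ζ) ^ (2:ℕ))
          + (∑' ξ : Fin d → ℤ, (∑' ζ : Fin d → ℤ, KB ξ ζ * F (ξ - ζ) * G ζ) ^ (2:ℕ))
          + (∑' ξ : Fin d → ℤ, (∑' ζ : Fin d → ℤ, KX ξ ζ * F (ξ - ζ) * G ζ) ^ (2:ℕ))) := by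
        rw [ENNReal.tsum_mul_left, ENNReal.tsum_add, ENNReal.tsum_add]
    _ ≤ 9 * ((cB * SS) * NF * NG + (cB * SS) * NF * NG + (cB * SS) * NF * NG) :=
        mul_le_mul' le_rfl (add_le_add (add_le_add TA TB) TX)
    _ = 27 * cB * SS * NF * NG := by ring


-- === glue to the statement ===

noncomputable def Esig {d : ℕ} (σ : ℝ) (ξ : Fin d → ℤ) : ℝ≥0∞ :=
  ENNReal.ofReal (Real.exp (σ * latNorm ξ))

lemma enn_norm_tsum_le {ι : Type*} [Countable ι] (f : ι → ℂ) :
    (‖∑' i, f i‖₊ : ℝ≥0∞) ≤ ∑' i, (‖f i‖₊ : ℝ≥0∞) := by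
  by_cases h : Summable (fun i => ‖f i‖)
  · have hf : Summable f := Summable.of_norm h
    calc (‖∑' i, f i‖₊ : ℝ≥0∞) = ENNReal.ofReal ‖∑' i, f i‖ :=
          (ofReal_norm _).symm
      _ ≤ ENNReal.ofReal (∑' i, ‖f i‖) :=
          ENNReal.ofReal_le_ofReal (norm_tsum_le_tsum_norm h)
      _ = ∑' i, ENNReal.ofReal ‖f i‖ :=
          ENNReal.ofReal_tsum_of_nonneg (fun i => norm_nonneg _) h
      _ = ∑' i, (‖f i‖₊ : ℝ≥0∞) := tsum_congr fun i => ofReal_norm _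
  · have h' : ¬ Summable (fun i => ‖f i‖₊) := by
      intro hs
      exact h (by simpa using NNReal.summable_coe.2 hs)
    have : (∑' i, (‖f i‖₊ : ℝ≥0∞)) = ⊤ := by
      by_contra hne
      exact h' (ENNReal.tsum_coe_ne_top_iff_summable.mp hne)
    rw [this]
    exact le_top

lemma Esig_tri {d : ℕ} {σ : ℝ} (hσ : 0 ≤ σ) (ξ ζ : Fin d → ℤ) :
    Esig σ ξ ≤ Esig σ (ξ - ζ) * Esig σ ζ := by
  rw [Esig, Esig, Esig, ← ENNReal.ofReal_mul (Real.exp_pos _).le, ← Real.exp_add]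
  apply ENNReal.ofReal_le_ofReal
  apply Real.exp_le_exp.2
  rw [← mul_add]
  apply mul_le_mul_of_nonneg_left _ hσ
  have h := latNorm_triangle (ξ - ζ) ζ
  rwa [sub_add_cancel] at h

lemma Kfun_id {d : ℕ} (s₁ s₂ s₃ : ℝ) (ξ ζ : Fin d → ℤ) :
    Kfun s₁ s₂ s₃ ξ ζ * J (ξ - ζ) ^ s₁ * J ζ ^ s₂ = J ξ ^ s₃ := by
  rw [Kfun]
  calc J ξ ^ s₃ * J (ξ - ζ) ^ (-s₁) * J ζ ^ (-s₂) * J (ξ - ζ) ^ s₁ * J ζ ^ s₂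
      = J ξ ^ s₃ * (J (ξ - ζ) ^ (-s₁) * J (ξ - ζ) ^ s₁) * (J ζ ^ (-s₂) * J ζ ^ s₂) := by
        ring
    _ = J ξ ^ s₃ := by
        rw [Jpow_mul, Jpow_mul, neg_add_cancel, neg_add_cancel]
        simp


lemma weight_eq {d : ℕ} (σ s : ℝ) (ξ : Fin d → ℤ) :
    hWeight σ s ξ = (Esig σ ξ * J ξ ^ s) ^ (2:ℕ) := by
  rw [hWeight, Esig, J, mul_pow, ← ENNReal.ofReal_pow (Real.exp_pos _).le, sq_rpow,
    ENNReal.ofReal_rpow_of_pos (lt_of_lt_of_le one_pos (one_le_latJap ξ)),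
    ← ENNReal.ofReal_mul (by positivity)]
  congr 2
  rw [pow_two, ← Real.exp_add]
  congr 1
  ring

lemma hNormSq_eq {d : ℕ} (σ s : ℝ) (c : (Fin d → ℤ) → ℂ) :
    hNormSq σ s c = ∑' ξ : Fin d → ℤ, (Esig σ ξ * J ξ ^ s * (‖c ξ‖₊ : ℝ≥0∞)) ^ (2:ℕ) := by
  rw [hNormSq]
  exact tsum_congr fun ξ => by rw [weight_eq]; ring

lemma conv_point {d : ℕ} (σ s₁ s₂ s₃ : ℝ) (hσ : 0 ≤ σ) (u₁ u₂ : (Fin d → ℤ) → ℂ)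
    (ξ : Fin d → ℤ) :
    Esig σ ξ * J ξ ^ s₃ * (‖conv u₁ u₂ ξ‖₊ : ℝ≥0∞)
      ≤ ∑' ζ : Fin d → ℤ, Kfun s₁ s₂ s₃ ξ ζ
          * (Esig σ (ξ - ζ) * J (ξ - ζ) ^ s₁ * (‖u₁ (ξ - ζ)‖₊ : ℝ≥0∞))
          * (Esig σ ζ * J ζ ^ s₂ * (‖u₂ ζ‖₊ : ℝ≥0∞)) := by
  have step : ∀ ζ : Fin d → ℤ,
      Esig σ ξ * J ξ ^ s₃ * ((‖u₁ (ξ - ζ)‖₊ : ℝ≥0∞) * (‖u₂ ζ‖₊ : ℝ≥0∞))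
        ≤ Kfun s₁ s₂ s₃ ξ ζ
            * (Esig σ (ξ - ζ) * J (ξ - ζ) ^ s₁ * (‖u₁ (ξ - ζ)‖₊ : ℝ≥0∞))
            * (Esig σ ζ * J ζ ^ s₂ * (‖u₂ ζ‖₊ : ℝ≥0∞)) := by
    intro ζ
    calc Esig σ ξ * J ξ ^ s₃ * ((‖u₁ (ξ - ζ)‖₊ : ℝ≥0∞) * (‖u₂ ζ‖₊ : ℝ≥0∞))
        ≤ (Esig σ (ξ - ζ) * Esig σ ζ) * J ξ ^ s₃
            * ((‖u₁ (ξ - ζ)‖₊ : ℝ≥0∞) * (‖u₂ ζ‖₊ : ℝ≥0∞)) :=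
          mul_le_mul' (mul_le_mul' (Esig_tri hσ ξ ζ) le_rfl) le_rfl
      _ = (Esig σ (ξ - ζ) * Esig σ ζ)
            * (Kfun s₁ s₂ s₃ ξ ζ * J (ξ - ζ) ^ s₁ * J ζ ^ s₂)
            * ((‖u₁ (ξ - ζ)‖₊ : ℝ≥0∞) * (‖u₂ ζ‖₊ : ℝ≥0∞)) := by
          rw [Kfun_id]
      _ = Kfun s₁ s₂ s₃ ξ ζ
            * (Esig σ (ξ - ζ) * J (ξ - ζ) ^ s₁ * (‖u₁ (ξ - ζ)‖₊ : ℝ≥0∞))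
            * (Esig σ ζ * J ζ ^ s₂ * (‖u₂ ζ‖₊ : ℝ≥0∞)) := by
          ring
  calc Esig σ ξ * J ξ ^ s₃ * (‖conv u₁ u₂ ξ‖₊ : ℝ≥0∞)
      ≤ Esig σ ξ * J ξ ^ s₃ * ∑' ζ : Fin d → ℤ, (‖u₁ (ξ - ζ)‖₊ : ℝ≥0∞) * (‖u₂ ζ‖₊ : ℝ≥0∞) := by
        apply mul_le_mul' le_rfl
        rw [conv]
        calc (‖∑' ζ : Fin d → ℤ, u₁ (ξ - ζ) * u₂ ζ‖₊ : ℝ≥0∞)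
            ≤ ∑' ζ : Fin d → ℤ, (‖u₁ (ξ - ζ) * u₂ ζ‖₊ : ℝ≥0∞) := enn_norm_tsum_le _
          _ = ∑' ζ : Fin d → ℤ, (‖u₁ (ξ - ζ)‖₊ : ℝ≥0∞) * (‖u₂ ζ‖₊ : ℝ≥0∞) :=
              tsum_congr fun ζ => by rw [nnnorm_mul, ENNReal.coe_mul]
    _ = ∑' ζ : Fin d → ℤ,
          Esig σ ξ * J ξ ^ s₃ * ((‖u₁ (ξ - ζ)‖₊ : ℝ≥0∞) * (‖u₂ ζ‖₊ : ℝ≥0∞)) :=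
        ENNReal.tsum_mul_left.symm
    _ ≤ _ := ENNReal.tsum_le_tsum step

end S8

/-- Product estimate in analytic Sobolev spaces: if
`s₁+s₂ ≥ 0`, `s₃ ≤ min{s₁,s₂}`, `s₃ < s₁+s₂-d/2`, then there is `C > 0`,
uniform in `σ ≥ 0`, with `‖u₁u₂‖_{H^{σ,s₃}} ≤ C ‖u₁‖_{H^{σ,s₁}} ‖u₂‖_{H^{σ,s₂}}`. -/
theorem statement8 (d : ℕ) (s₁ s₂ s₃ : ℝ) (h12 : 0 ≤ s₁ + s₂)
    (h31 : s₃ ≤ s₁) (h32 : s₃ ≤ s₂) (h3 : s₃ < s₁ + s₂ - (d : ℝ) / 2) :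
    ∃ C : ℝ, 0 < C ∧ ∀ σ : ℝ, 0 ≤ σ → ∀ u₁ u₂ : (Fin d → ℤ) → ℂ,
      hNormSq σ s₁ u₁ ≠ ⊤ → hNormSq σ s₂ u₂ ≠ ⊤ →
      hNorm σ s₃ (conv u₁ u₂)
        ≤ ENNReal.ofReal C * hNorm σ s₁ u₁ * hNorm σ s₂ u₂ := by
  classical
  have hr : (d:ℝ)/2 < s₁ + s₂ - s₃ := by linarith
  set SS := ∑' x : Fin d → ℤ, S8.J x ^ (-(s₁ + s₂ - s₃ + (d:ℝ)/2)) with hSS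
  have hSSfin : SS < ⊤ := S8.sumJ d (s₁ + s₂ - s₃ + (d:ℝ)/2) (by linarith)
  set C₀ : ℝ≥0∞ := 27 * (2:ℝ≥0∞)^(2*(|s₁|+|s₂|+|s₃|)) * SS with hC₀
  have hC₀fin : C₀ ≠ ⊤ := by
    rw [hC₀]
    exact ENNReal.mul_ne_top (ENNReal.mul_ne_top (by norm_num) (S8.two_rpow_ne_top _)) hSSfin.ne
  have hC₀half : C₀ ^ (1/2:ℝ) ≠ ⊤ := ENNReal.rpow_ne_top_of_nonneg (by norm_num) hC₀fin
  refine ⟨(C₀ ^ (1/2:ℝ)).toReal + 1, by positivity, ?_⟩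
  intro σ hσ u₁ u₂ _ _
  set F : (Fin d → ℤ) → ℝ≥0∞ :=
    fun η => S8.Esig σ η * S8.J η ^ s₁ * (‖u₁ η‖₊ : ℝ≥0∞) with hF
  set G : (Fin d → ℤ) → ℝ≥0∞ :=
    fun ζ => S8.Esig σ ζ * S8.J ζ ^ s₂ * (‖u₂ ζ‖₊ : ℝ≥0∞) with hG
  have hN3 : hNormSq σ s₃ (conv u₁ u₂) ≤ C₀ * hNormSq σ s₁ u₁ * hNormSq σ s₂ u₂ := by
    rw [S8.hNormSq_eq σ s₃, S8.hNormSq_eq σ s₁, S8.hNormSq_eq σ s₂]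
    calc ∑' ξ : Fin d → ℤ, (S8.Esig σ ξ * S8.J ξ ^ s₃ * (‖conv u₁ u₂ ξ‖₊ : ℝ≥0∞)) ^ (2:ℕ)
        ≤ ∑' ξ : Fin d → ℤ,
            (∑' ζ : Fin d → ℤ, S8.Kfun s₁ s₂ s₃ ξ ζ * F (ξ - ζ) * G ζ) ^ (2:ℕ) :=
          ENNReal.tsum_le_tsum fun ξ =>
            pow_le_pow_left₀ (zero_le) (S8.conv_point σ s₁ s₂ s₃ hσ u₁ u₂ ξ) 2
      _ ≤ 27 * (2:ℝ≥0∞)^(2*(|s₁|+|s₂|+|s₃|)) * SS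
            * (∑' η : Fin d → ℤ, F η ^ (2:ℕ)) * (∑' ζ : Fin d → ℤ, G ζ ^ (2:ℕ)) :=
          S8.core s₁ s₂ s₃ h12 h31 h32 hr F G
      _ = C₀ * (∑' η : Fin d → ℤ, F η ^ (2:ℕ)) * (∑' ζ : Fin d → ℤ, G ζ ^ (2:ℕ)) := by
          rw [hC₀]
  have hC : C₀ ^ (1/2:ℝ) ≤ ENNReal.ofReal ((C₀ ^ (1/2:ℝ)).toReal + 1) := by
    conv_lhs => rw [← ENNReal.ofReal_toReal hC₀half]
    exact ENNReal.ofReal_le_ofReal (by linarith [ENNReal.toReal_nonneg (a := C₀ ^ (1/2:ℝ))])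
  rw [hNorm, hNorm, hNorm]
  calc (hNormSq σ s₃ (conv u₁ u₂)) ^ (1/2:ℝ)
      ≤ (C₀ * hNormSq σ s₁ u₁ * hNormSq σ s₂ u₂) ^ (1/2:ℝ) :=
        ENNReal.rpow_le_rpow hN3 (by norm_num)
    _ = C₀ ^ (1/2:ℝ) * (hNormSq σ s₁ u₁) ^ (1/2:ℝ) * (hNormSq σ s₂ u₂) ^ (1/2:ℝ) := by
        rw [ENNReal.mul_rpow_of_nonneg _ _ (by norm_num : (0:ℝ) ≤ 1/2),
          ENNReal.mul_rpow_of_nonneg _ _ (by norm_num : (0:ℝ) ≤ 1/2)]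
    _ ≤ ENNReal.ofReal ((C₀ ^ (1/2:ℝ)).toReal + 1) * (hNormSq σ s₁ u₁) ^ (1/2:ℝ)
          * (hNormSq σ s₂ u₂) ^ (1/2:ℝ) :=
        mul_le_mul' (mul_le_mul' hC le_rfl) le_rfl
end

section
/- Let s₀ > d/2, s ≥ 0, M₀ > 0, and let f be holomorphic on {z ∈ C : |z| < M₀} with f(0) = 0 and Taylor coefficients aₙ satisfying |aₙ| ≤ K^n for some K > 0. Then there exists ε₀ > 0 and C > 0 (depending only on f, s, s₀, ε₀, d) such that for all σ > 0 and all u ∈ H^{σ,s} ∩ H^{σ,s₀} with ‖u‖_{H^{σ,s₀}} ≤ ε₀, the composition f(u) belongs to H^{σ,s} and ‖f(u)‖_{H^{σ,s}} ≤ C ‖u‖_{H^{σ,s}}. -/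
open scoped ENNReal BigOperators

/-- Iterated convolution powers, representing the pointwise powers `uⁿ`
(`u⁰ = 1` corresponds to the Dirac mass at frequency `0`). -/
noncomputable def convPow {d : ℕ} (c : (Fin d → ℤ) → ℂ) : ℕ → ((Fin d → ℤ) → ℂ)
  | 0 => fun ξ => if ξ = 0 then 1 else 0
  | n + 1 => conv (convPow c n) c

/-!
Write `f(u) = ∑ aₙ uⁿ`. On Fourier coefficients the weight `e^{σ|ξ|}⟨ξ⟩^s` splits across
`ξ = (ξ - ζ) + ζ` up to a factor `2^s`, so Young's inequality gives the tame estimate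
`‖uv‖_s ≤ 2^s (‖u‖_s |v|_σ + |u|_σ ‖v‖_s)` with `|v|_σ = ∑ e^{σ|ζ|} |v̂(ζ)|`, and Cauchy–Schwarz
bounds `|v|_σ` by `‖v‖_{s₀}` because `∑ ⟨ζ⟩^{-2s₀} < ∞` for `s₀ > d/2`. Induction then gives
`‖uⁿ⁺¹‖_s ≤ (2C ‖u‖_{s₀})ⁿ ‖u‖_s`, so for `‖u‖_{s₀}` small the series for `f(u)` is dominated
by a geometric series.
-/

open MeasureTheory

namespace AnalyticSobolev

section L2

variable {ι : Type*}

noncomputable def l2 (F : ι → ℝ≥0∞) : ℝ≥0∞ :=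
  (∑' i, F i ^ 2) ^ (1/2 : ℝ)

lemma rpow_half_sq (x : ℝ≥0∞) : (x ^ (1/2 : ℝ)) ^ 2 = x := by
  rw [← ENNReal.rpow_two, ← ENNReal.rpow_mul]
  norm_num

lemma sq_rpow_half (x : ℝ≥0∞) : (x ^ 2) ^ (1/2 : ℝ) = x := by
  rw [← ENNReal.rpow_two, ← ENNReal.rpow_mul]
  norm_num

lemma l2_mono {F H : ι → ℝ≥0∞} (h : ∀ i, F i ≤ H i) : l2 F ≤ l2 H :=
  ENNReal.rpow_le_rpow (ENNReal.tsum_le_tsum fun i => pow_le_pow_left' (h i) 2) (by norm_num)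

lemma l2_const_mul (a : ℝ≥0∞) (F : ι → ℝ≥0∞) : l2 (fun i => a * F i) = a * l2 F := by
  simp only [l2, mul_pow, ENNReal.tsum_mul_left]
  rw [ENNReal.mul_rpow_of_nonneg _ _ (by norm_num), sq_rpow_half]

/- The `ℓ²` facts below are read off the `L²` inequalities for the counting measure on the
discrete measurable space. -/
lemma tsum_mul_le_l2_mul_l2 (F H : ι → ℝ≥0∞) : ∑' i, F i * H i ≤ l2 F * l2 H := by
  let _ : MeasurableSpace ι := ⊤
  have := ENNReal.lintegral_mul_le_Lp_mul_Lq Measure.count Real.HolderConjugate.two_two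
    (measurable_from_top (f := F)).aemeasurable (measurable_from_top (f := H)).aemeasurable
  simp only [lintegral_count, ENNReal.rpow_two, Pi.mul_apply] at this
  exact this

lemma l2_add_le (F H : ι → ℝ≥0∞) : l2 (fun i => F i + H i) ≤ l2 F + l2 H := by
  let _ : MeasurableSpace ι := ⊤
  have := ENNReal.lintegral_Lp_add_le (p := 2) (μ := Measure.count)
    (measurable_from_top (f := F)).aemeasurable (measurable_from_top (f := H)).aemeasurable
    (by norm_num)
  simp only [lintegral_count, ENNReal.rpow_two, Pi.add_apply] at this
  exact this

lemma l2_iSup_of_monotone {F : ℕ → ι → ℝ≥0∞} (hF : Monotone F) :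
    l2 (fun i => ⨆ n, F n i) = ⨆ n, l2 (F n) := by
  let _ : MeasurableSpace ι := ⊤
  have hsq : Monotone fun n i => F n i ^ 2 := fun m n hmn i => pow_le_pow_left' (hF hmn i) 2
  simp only [l2, ENNReal.iSup_pow, ← lintegral_count]
  rw [lintegral_iSup (fun _ => measurable_from_top) hsq]
  exact (ENNReal.orderIsoRpow (1/2) (by norm_num)).map_iSup _

lemma l2_sum_le (F : ℕ → ι → ℝ≥0∞) (N : ℕ) :
    l2 (fun i => ∑ n ∈ Finset.range N, F n i) ≤ ∑ n ∈ Finset.range N, l2 (F n) := by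
  induction N with
  | zero => simp [l2]
  | succ N ih =>
    simp only [Finset.sum_range_succ]
    exact (l2_add_le _ _).trans (add_le_add ih le_rfl)

lemma l2_tsum_le (F : ℕ → ι → ℝ≥0∞) : l2 (fun i => ∑' n, F n i) ≤ ∑' n, l2 (F n) := by
  have hmono : Monotone fun N i => ∑ n ∈ Finset.range N, F n i :=
    fun M N hMN i => Finset.sum_le_sum_of_subset (Finset.range_subset_range.2 hMN)
  simp only [ENNReal.tsum_eq_iSup_nat]
  rw [l2_iSup_of_monotone hmono]
  exact iSup_mono (l2_sum_le F)

end L2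

/- Young's inequality `‖F * H‖₂ ≤ ‖F‖₂ ‖H‖₁`, from Cauchy–Schwarz against the measure `H`:
`(∑ F(ξ-ζ) H ζ)² ≤ (∑ F(ξ-ζ)² H ζ) (∑ H ζ)`. -/
lemma l2_conv_le {G : Type*} [AddGroup G] (F H : G → ℝ≥0∞) :
    l2 (fun ξ => ∑' ζ, F (ξ - ζ) * H ζ) ≤ l2 F * ∑' ζ, H ζ := by
  have hpoint : ∀ ξ, (∑' ζ, F (ξ - ζ) * H ζ) ^ 2
      ≤ (∑' ζ, F (ξ - ζ) ^ 2 * H ζ) * ∑' ζ, H ζ := fun ξ => by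
    have hcs := tsum_mul_le_l2_mul_l2 (fun ζ => F (ξ - ζ) * H ζ ^ (1/2 : ℝ))
      (fun ζ => H ζ ^ (1/2 : ℝ))
    simp only [mul_assoc, ← sq, rpow_half_sq, l2, mul_pow] at hcs
    simpa only [mul_pow, rpow_half_sq] using pow_le_pow_left' hcs 2
  have hshift : ∀ ζ, ∑' ξ, F (ξ - ζ) ^ 2 = ∑' ξ, F ξ ^ 2 :=
    fun ζ => (Equiv.subRight ζ).tsum_eq fun ξ => F ξ ^ 2
  have hsum : ∑' ξ, (∑' ζ, F (ξ - ζ) * H ζ) ^ 2 ≤ (∑' ξ, F ξ ^ 2) * (∑' ζ, H ζ) ^ 2 :=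
    calc ∑' ξ, (∑' ζ, F (ξ - ζ) * H ζ) ^ 2
        ≤ ∑' ξ, (∑' ζ, F (ξ - ζ) ^ 2 * H ζ) * ∑' ζ, H ζ := ENNReal.tsum_le_tsum hpoint
      _ = (∑' ζ, (∑' ξ, F (ξ - ζ) ^ 2) * H ζ) * ∑' ζ, H ζ := by
          rw [ENNReal.tsum_mul_right, ENNReal.tsum_comm]
          simp only [ENNReal.tsum_mul_right]
      _ = (∑' ξ, F ξ ^ 2) * (∑' ζ, H ζ) ^ 2 := by
          simp only [hshift, ENNReal.tsum_mul_left]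
          ring
  calc l2 (fun ξ => ∑' ζ, F (ξ - ζ) * H ζ)
      ≤ ((∑' ξ, F ξ ^ 2) * (∑' ζ, H ζ) ^ 2) ^ (1/2 : ℝ) :=
        ENNReal.rpow_le_rpow hsum (by norm_num)
    _ = l2 F * ∑' ζ, H ζ := by
        rw [ENNReal.mul_rpow_of_nonneg _ _ (by norm_num), sq_rpow_half, l2]

section Lattice

variable {d : ℕ}

lemma norm_toLp_intCast (ζ : Fin d → ℤ) :
    ‖WithLp.toLp 2 (fun i => (ζ i : ℝ))‖ = latNorm ζ := by
  simp [EuclideanSpace.norm_eq, latNorm]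

lemma latNorm_add_le (x y : Fin d → ℤ) : latNorm (x + y) ≤ latNorm x + latNorm y := by
  have hsplit : WithLp.toLp 2 (fun i => ((x + y) i : ℝ))
      = WithLp.toLp 2 (fun i => (x i : ℝ)) + WithLp.toLp 2 (fun i => (y i : ℝ)) := by
    ext i
    simp
  simpa only [← norm_toLp_intCast, hsplit] using norm_add_le _ _

lemma latNorm_pos {ζ : Fin d → ℤ} (hζ : ζ ≠ 0) : 0 < latNorm ζ := by
  rw [← norm_toLp_intCast, norm_pos_iff]
  intro h
  exact hζ (funext fun i => by simpa using congrArg (· i) h)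

lemma latJap_eq_sqrt (x : Fin d → ℤ) : latJap x = √(1 + latNorm x ^ 2) := by
  rw [latJap, latNorm, Real.sq_sqrt (Finset.sum_nonneg fun i _ => sq_nonneg _)]

lemma latNorm_le_latJap (x : Fin d → ℤ) : latNorm x ≤ latJap x := by
  rw [latJap_eq_sqrt]
  exact Real.le_sqrt_of_sq_le (by linarith)

lemma latJap_pos (x : Fin d → ℤ) : 0 < latJap x := by
  rw [latJap_eq_sqrt]
  positivity

lemma sqrt_one_add_sq_add_le {a b : ℝ} (hb : 0 ≤ b) :
    √(1 + (a + b) ^ 2) ≤ √(1 + a ^ 2) + √(1 + b ^ 2) := by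
  have hA := Real.sq_sqrt (by positivity : (0 : ℝ) ≤ 1 + a ^ 2)
  have hB := Real.sq_sqrt (by positivity : (0 : ℝ) ≤ 1 + b ^ 2)
  have haA : a ≤ √(1 + a ^ 2) := Real.le_sqrt_of_sq_le (by linarith)
  have hbB : b ≤ √(1 + b ^ 2) := Real.le_sqrt_of_sq_le (by linarith)
  rw [Real.sqrt_le_left (by positivity)]
  nlinarith [mul_le_mul haA hbB hb (Real.sqrt_nonneg _)]

lemma latJap_add_le (x y : Fin d → ℤ) : latJap (x + y) ≤ latJap x + latJap y := by
  simp only [latJap_eq_sqrt]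
  calc √(1 + latNorm (x + y) ^ 2) ≤ √(1 + (latNorm x + latNorm y) ^ 2) := by
        gcongr
        · exact Real.sqrt_nonneg _
        · exact latNorm_add_le x y
    _ ≤ _ := sqrt_one_add_sq_add_le (Real.sqrt_nonneg _)

open Module in
lemma summable_latNorm_rpow {r : ℝ} (hr : r < -d) :
    Summable fun ζ : Fin d → ℤ => latNorm ζ ^ r := by
  let b := (EuclideanSpace.basisFun (Fin d) ℝ).toBasis
  let L := Submodule.span ℤ (Set.range b)
  have hrank : finrank ℤ L = d := by
    rw [finrank_span_eq_card (b.linearIndependent.restrict_scalars' ℤ)]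
    simp
  let e := (b.restrictScalars ℤ).equivFun
  have hnorm : ∀ ζ, ‖(e.symm ζ : EuclideanSpace ℝ (Fin d))‖ = latNorm ζ := fun ζ => by
    rw [← norm_toLp_intCast]
    congr 1
    ext i
    simp only [e, Basis.equivFun_symm_apply, Submodule.coe_sum, Submodule.coe_smul_of_tower,
      Basis.restrictScalars_apply, b]
    simp [Finset.sum_apply, Pi.single_apply]
  simpa [Function.comp_def, hnorm] using
    (ZLattice.summable_norm_rpow L r (by rwa [hrank])).comp_injective e.symm.injective

lemma summable_latJap_rpow {r : ℝ} (hr : r < -d) :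
    Summable fun ζ : Fin d → ℤ => latJap ζ ^ r := by
  refine ((summable_latNorm_rpow hr).update 0 1).of_nonneg_of_le
    (fun ζ => Real.rpow_nonneg (latJap_pos ζ).le r) fun ζ => ?_
  rcases eq_or_ne ζ 0 with rfl | hζ
  · simp [latJap]
  · rw [Function.update_of_ne hζ]
    exact Real.rpow_le_rpow_of_nonpos (latNorm_pos hζ) (latNorm_le_latJap ζ)
      (hr.le.trans (by simp))

end Lattice

section Weights

variable {d : ℕ}

noncomputable def weight (σ s : ℝ) (ξ : Fin d → ℤ) : ℝ :=
  Real.exp (σ * latNorm ξ) * latJap ξ ^ s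

lemma weight_nonneg (σ s : ℝ) (ξ : Fin d → ℤ) : 0 ≤ weight σ s ξ :=
  mul_nonneg (Real.exp_pos _).le (Real.rpow_nonneg (latJap_pos ξ).le s)

lemma hWeight_eq (σ s : ℝ) (ξ : Fin d → ℤ) :
    hWeight σ s ξ = ENNReal.ofReal (weight σ s ξ) ^ 2 := by
  rw [hWeight, ← ENNReal.ofReal_pow (weight_nonneg σ s ξ), weight, mul_pow, ← Real.exp_nat_mul,
    ← Real.rpow_natCast (latJap ξ ^ s), ← Real.rpow_mul (latJap_pos ξ).le]
  push_cast
  ring_nf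

lemma rpow_add_le_two_rpow_mul {a b s : ℝ} (ha : 0 ≤ a) (hb : 0 ≤ b) (hs : 0 ≤ s) :
    (a + b) ^ s ≤ 2 ^ s * (a ^ s + b ^ s) := by
  have hmax : max a b ^ s ≤ a ^ s + b ^ s := by
    rcases max_choice a b with h | h <;> rw [h] <;>
      linarith [Real.rpow_nonneg ha s, Real.rpow_nonneg hb s]
  calc (a + b) ^ s ≤ (2 * max a b) ^ s := by
        gcongr
        linarith [le_max_left a b, le_max_right a b]
    _ = 2 ^ s * max a b ^ s := Real.mul_rpow (by norm_num) (le_max_of_le_left ha)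
    _ ≤ 2 ^ s * (a ^ s + b ^ s) := by gcongr

lemma weight_le {σ s : ℝ} (hσ : 0 ≤ σ) (hs : 0 ≤ s) (ξ ζ : Fin d → ℤ) :
    weight σ s ξ ≤ 2 ^ s *
      (weight σ s (ξ - ζ) * weight σ 0 ζ + weight σ 0 (ξ - ζ) * weight σ s ζ) := by
  have hsplit : ξ = (ξ - ζ) + ζ := (sub_add_cancel ξ ζ).symm
  have hexp : Real.exp (σ * latNorm ξ)
      ≤ Real.exp (σ * latNorm (ξ - ζ)) * Real.exp (σ * latNorm ζ) := by
    rw [← Real.exp_add, ← mul_add]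
    gcongr
    conv_lhs => rw [hsplit]
    exact latNorm_add_le _ _
  have hjap : latJap ξ ^ s ≤ 2 ^ s * (latJap (ξ - ζ) ^ s + latJap ζ ^ s) :=
    calc latJap ξ ^ s ≤ (latJap (ξ - ζ) + latJap ζ) ^ s := by
          gcongr
          · exact (latJap_pos ξ).le
          · conv_lhs => rw [hsplit]
            exact latJap_add_le _ _
      _ ≤ _ := rpow_add_le_two_rpow_mul (latJap_pos _).le (latJap_pos _).le hs
  calc weight σ s ξ
      ≤ (Real.exp (σ * latNorm (ξ - ζ)) * Real.exp (σ * latNorm ζ))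
        * (2 ^ s * (latJap (ξ - ζ) ^ s + latJap ζ ^ s)) :=
        mul_le_mul hexp hjap (Real.rpow_nonneg (latJap_pos ξ).le s) (by positivity)
    _ = _ := by
        simp only [weight, Real.rpow_zero, mul_one]
        ring

lemma ofReal_weight_le {σ s : ℝ} (hσ : 0 ≤ σ) (hs : 0 ≤ s) (ξ ζ : Fin d → ℤ) :
    ENNReal.ofReal (weight σ s ξ) ≤ ENNReal.ofReal (2 ^ s) *
      (ENNReal.ofReal (weight σ s (ξ - ζ)) * ENNReal.ofReal (weight σ 0 ζ)
        + ENNReal.ofReal (weight σ 0 (ξ - ζ)) * ENNReal.ofReal (weight σ s ζ)) := by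
  simp only [← ENNReal.ofReal_mul (weight_nonneg _ _ _),
    ← ENNReal.ofReal_add (mul_nonneg (weight_nonneg _ _ _) (weight_nonneg _ _ _))
      (mul_nonneg (weight_nonneg _ _ _) (weight_nonneg _ _ _)),
    ← ENNReal.ofReal_mul (by positivity : (0 : ℝ) ≤ 2 ^ s)]
  exact ENNReal.ofReal_le_ofReal (weight_le hσ hs ξ ζ)

noncomputable def weighted (σ s : ℝ) (c : (Fin d → ℤ) → ℂ) : (Fin d → ℤ) → ℝ≥0∞ :=
  fun ξ => ENNReal.ofReal (weight σ s ξ) * ‖c ξ‖ₑ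

lemma hNorm_eq_l2 (σ s : ℝ) (c : (Fin d → ℤ) → ℂ) : hNorm σ s c = l2 (weighted σ s c) := by
  simp only [hNorm, hNormSq, l2, weighted, mul_pow, hWeight_eq, enorm_eq_nnnorm]

end Weights

section Tame

variable {d : ℕ}

lemma tsum_mul_sub_comm {G : Type*} [AddCommGroup G] (F H : G → ℝ≥0∞) (ξ : G) :
    ∑' ζ, F (ξ - ζ) * H ζ = ∑' ζ, H (ξ - ζ) * F ζ := by
  rw [← (Equiv.subLeft ξ).tsum_eq fun ζ => H (ξ - ζ) * F ζ]
  simp only [Equiv.subLeft_apply, sub_sub_cancel]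
  exact tsum_congr fun ζ => mul_comm _ _

lemma weighted_conv_le {σ s : ℝ} (hσ : 0 ≤ σ) (hs : 0 ≤ s) (f g : (Fin d → ℤ) → ℂ)
    (ξ : Fin d → ℤ) :
    weighted σ s (conv f g) ξ ≤ ENNReal.ofReal (2 ^ s) *
      (∑' ζ, weighted σ s f (ξ - ζ) * weighted σ 0 g ζ
        + ∑' ζ, weighted σ s g (ξ - ζ) * weighted σ 0 f ζ) := by
  have hterm : ∀ ζ, ENNReal.ofReal (weight σ s ξ) * (‖f (ξ - ζ)‖ₑ * ‖g ζ‖ₑ)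
      ≤ ENNReal.ofReal (2 ^ s) * (weighted σ s f (ξ - ζ) * weighted σ 0 g ζ
        + weighted σ 0 f (ξ - ζ) * weighted σ s g ζ) := fun ζ =>
    calc _ ≤ ENNReal.ofReal (2 ^ s) *
            (ENNReal.ofReal (weight σ s (ξ - ζ)) * ENNReal.ofReal (weight σ 0 ζ)
              + ENNReal.ofReal (weight σ 0 (ξ - ζ)) * ENNReal.ofReal (weight σ s ζ))
            * (‖f (ξ - ζ)‖ₑ * ‖g ζ‖ₑ) := by gcongr; exact ofReal_weight_le hσ hs ξ ζ
      _ = _ := by simp only [weighted]; ring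
  calc weighted σ s (conv f g) ξ
      ≤ ENNReal.ofReal (weight σ s ξ) * ∑' ζ, ‖f (ξ - ζ)‖ₑ * ‖g ζ‖ₑ := by
        simp only [weighted, conv, ← enorm_mul]
        gcongr
        exact enorm_tsum_le_tsum_enorm
    _ ≤ ∑' ζ, ENNReal.ofReal (2 ^ s) * (weighted σ s f (ξ - ζ) * weighted σ 0 g ζ
          + weighted σ 0 f (ξ - ζ) * weighted σ s g ζ) := by
        rw [← ENNReal.tsum_mul_left]
        exact ENNReal.tsum_le_tsum hterm
    _ = _ := by
        rw [ENNReal.tsum_mul_left, ENNReal.tsum_add, tsum_mul_sub_comm (weighted σ 0 f)]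

lemma l2_weighted_conv_le {σ s : ℝ} (hσ : 0 ≤ σ) (hs : 0 ≤ s) (f g : (Fin d → ℤ) → ℂ) :
    l2 (weighted σ s (conv f g)) ≤ ENNReal.ofReal (2 ^ s) *
      (l2 (weighted σ s f) * ∑' ζ, weighted σ 0 g ζ
        + l2 (weighted σ s g) * ∑' ζ, weighted σ 0 f ζ) :=
  calc l2 (weighted σ s (conv f g))
      ≤ ENNReal.ofReal (2 ^ s) * l2 (fun ξ => ∑' ζ, weighted σ s f (ξ - ζ) * weighted σ 0 g ζ
          + ∑' ζ, weighted σ s g (ξ - ζ) * weighted σ 0 f ζ) := by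
        rw [← l2_const_mul]
        exact l2_mono (weighted_conv_le hσ hs f g)
    _ ≤ _ := by
        gcongr
        exact (l2_add_le _ _).trans (add_le_add (l2_conv_le _ _) (l2_conv_le _ _))

noncomputable def sobolevConst (d : ℕ) (s₀ : ℝ) : ℝ≥0∞ :=
  l2 fun ζ : Fin d → ℤ => ENNReal.ofReal (latJap ζ ^ (-s₀))

lemma sobolevConst_ne_top {s₀ : ℝ} (hs₀ : (d : ℝ) / 2 < s₀) : sobolevConst d s₀ ≠ ⊤ := by
  have hsq : ∀ ζ : Fin d → ℤ,
      ENNReal.ofReal (latJap ζ ^ (-s₀)) ^ 2 = ENNReal.ofReal (latJap ζ ^ (-(2 * s₀))) := by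
    intro ζ
    rw [← ENNReal.ofReal_pow (Real.rpow_nonneg (latJap_pos ζ).le _), ← Real.rpow_natCast,
      ← Real.rpow_mul (latJap_pos ζ).le]
    ring_nf
  have hsum := summable_latJap_rpow (d := d) (r := -(2 * s₀)) (by linarith)
  simp only [sobolevConst, l2, hsq,
    ← ENNReal.ofReal_tsum_of_nonneg (fun ζ => Real.rpow_nonneg (latJap_pos ζ).le _) hsum]
  exact ENNReal.rpow_ne_top_of_nonneg (by norm_num) ENNReal.ofReal_ne_top

/- Cauchy–Schwarz after writing `e^{σ|ζ|} = ⟨ζ⟩^{-s₀} · e^{σ|ζ|} ⟨ζ⟩^{s₀}`. -/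
lemma tsum_weighted_zero_le (σ s₀ : ℝ) (g : (Fin d → ℤ) → ℂ) :
    ∑' ζ, weighted σ 0 g ζ ≤ sobolevConst d s₀ * l2 (weighted σ s₀ g) := by
  have hsplit : ∀ ζ, weighted σ 0 g ζ
      = ENNReal.ofReal (latJap ζ ^ (-s₀)) * weighted σ s₀ g ζ := fun ζ => by
    have hJ := latJap_pos ζ
    rw [weighted, weighted, ← mul_assoc, ← ENNReal.ofReal_mul (Real.rpow_nonneg hJ.le _), weight,
      weight, mul_left_comm, ← Real.rpow_add hJ, neg_add_cancel]
  simp only [hsplit]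
  exact tsum_mul_le_l2_mul_l2 _ _

lemma hNorm_conv_le {σ s s₀ : ℝ} (hσ : 0 ≤ σ) (hs : 0 ≤ s) (f g : (Fin d → ℤ) → ℂ) :
    hNorm σ s (conv f g) ≤ ENNReal.ofReal (2 ^ s) * sobolevConst d s₀ *
      (hNorm σ s f * hNorm σ s₀ g + hNorm σ s₀ f * hNorm σ s g) := by
  simp only [hNorm_eq_l2]
  calc l2 (weighted σ s (conv f g))
      ≤ ENNReal.ofReal (2 ^ s) *
        (l2 (weighted σ s f) * (sobolevConst d s₀ * l2 (weighted σ s₀ g))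
          + l2 (weighted σ s g) * (sobolevConst d s₀ * l2 (weighted σ s₀ f))) := by
        refine (l2_weighted_conv_le hσ hs f g).trans ?_
        gcongr <;> exact tsum_weighted_zero_le σ s₀ _
    _ = _ := by ring

end Tame

section Powers

variable {d : ℕ}

lemma convPow_one (c : (Fin d → ℤ) → ℂ) : convPow c 1 = c := by
  funext ξ
  rw [convPow, conv, tsum_eq_single ξ fun ζ hζ => by simp [convPow, sub_eq_zero, Ne.symm hζ]]
  simp [convPow]

lemma convPow_succ_le_of_submul {q : ((Fin d → ℤ) → ℂ) → ℝ≥0∞} {A : ℝ≥0∞}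
    (hq : ∀ f g, q (conv f g) ≤ A * q f * q g) (c : (Fin d → ℤ) → ℂ) (n : ℕ) :
    q (convPow c (n + 1)) ≤ (A * q c) ^ n * q c := by
  induction n with
  | zero => simp [convPow_one]
  | succ n ih =>
    calc q (conv (convPow c (n + 1)) c) ≤ A * q (convPow c (n + 1)) * q c := hq _ _
      _ ≤ A * ((A * q c) ^ n * q c) * q c := by gcongr
      _ = (A * q c) ^ (n + 1) * q c := by ring

/- The high norm `p` enters each product linearly, so the powers grow only geometrically
in the low norm `q`. -/
lemma convPow_succ_le_of_tame {p q : ((Fin d → ℤ) → ℂ) → ℝ≥0∞} {C : ℝ≥0∞}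
    (hq : ∀ f g, q (conv f g) ≤ 2 * C * q f * q g)
    (hp : ∀ f g, p (conv f g) ≤ C * (p f * q g + q f * p g))
    (c : (Fin d → ℤ) → ℂ) (n : ℕ) :
    p (convPow c (n + 1)) ≤ (2 * C * q c) ^ n * p c := by
  induction n with
  | zero => simp [convPow_one]
  | succ n ih =>
    calc p (conv (convPow c (n + 1)) c)
        ≤ C * (p (convPow c (n + 1)) * q c + q (convPow c (n + 1)) * p c) := hp _ _
      _ ≤ C * ((2 * C * q c) ^ n * p c * q c + (2 * C * q c) ^ n * q c * p c) := by
          gcongr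
          exact convPow_succ_le_of_submul hq c n
      _ = (2 * C * q c) ^ (n + 1) * p c := by ring

lemma exists_hNorm_convPow_succ_le {s s₀ : ℝ} (hs₀ : (d : ℝ) / 2 < s₀) (hs : 0 ≤ s) :
    ∃ C ≠ ⊤, ∀ σ, 0 ≤ σ → ∀ (c : (Fin d → ℤ) → ℂ) (n : ℕ),
      hNorm σ s (convPow c (n + 1)) ≤ (2 * C * hNorm σ s₀ c) ^ n * hNorm σ s c := by
  have hs₀' : 0 ≤ s₀ := (div_nonneg (Nat.cast_nonneg d) zero_le_two).trans hs₀.le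
  set C := ENNReal.ofReal (2 ^ max s s₀) * sobolevConst d s₀
  have hmono : ∀ t ≤ max s s₀, ENNReal.ofReal (2 ^ t) * sobolevConst d s₀ ≤ C := fun t ht =>
    mul_le_mul' (ENNReal.ofReal_le_ofReal (Real.rpow_le_rpow_of_exponent_le one_le_two ht)) le_rfl
  refine ⟨C, ENNReal.mul_ne_top ENNReal.ofReal_ne_top (sobolevConst_ne_top hs₀),
    fun σ hσ c n => convPow_succ_le_of_tame (fun f g => ?_) (fun f g => ?_) c n⟩
  · calc hNorm σ s₀ (conv f g)
        ≤ ENNReal.ofReal (2 ^ s₀) * sobolevConst d s₀ *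
          (hNorm σ s₀ f * hNorm σ s₀ g + hNorm σ s₀ f * hNorm σ s₀ g) := hNorm_conv_le hσ hs₀' f g
      _ ≤ C * (hNorm σ s₀ f * hNorm σ s₀ g + hNorm σ s₀ f * hNorm σ s₀ g) := by
          gcongr
          exact hmono s₀ (le_max_right s s₀)
      _ = 2 * C * hNorm σ s₀ f * hNorm σ s₀ g := by ring
  · exact (hNorm_conv_le hσ hs f g).trans (by gcongr; exact hmono s (le_max_left s s₀))

lemma hNorm_tsum_mul_convPow_le (σ s : ℝ) (a : ℕ → ℂ) (c : (Fin d → ℤ) → ℂ) :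
    hNorm σ s (fun ξ => ∑' n, a n * convPow c n ξ) ≤ ∑' n, ‖a n‖ₑ * hNorm σ s (convPow c n) := by
  simp only [hNorm_eq_l2, ← l2_const_mul]
  refine (l2_mono fun ξ => ?_).trans (l2_tsum_le _)
  calc weighted σ s (fun ξ => ∑' n, a n * convPow c n ξ) ξ
      ≤ ENNReal.ofReal (weight σ s ξ) * ∑' n, ‖a n * convPow c n ξ‖ₑ := by
        rw [weighted]
        gcongr
        exact enorm_tsum_le_tsum_enorm
    _ = ∑' n, ‖a n‖ₑ * weighted σ s (convPow c n) ξ := by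
        rw [← ENNReal.tsum_mul_left]
        simp only [weighted, enorm_mul]
        exact tsum_congr fun n => by ring

end Powers

lemma exists_pos_mul_ofReal_le {X : ℝ≥0∞} (hX : X ≠ ⊤) : ∃ ε > 0, X * ENNReal.ofReal ε ≤ 2⁻¹ := by
  obtain ⟨δ, hδ, hδX⟩ := ENNReal.exists_pos_mul_lt hX (by norm_num : (2⁻¹ : ℝ≥0∞) ≠ 0)
  refine ⟨(min δ 1).toReal, ENNReal.toReal_pos (by positivity) (by simp), ?_⟩
  rw [ENNReal.ofReal_toReal (by simp), mul_comm]
  exact (mul_le_mul' (min_le_left δ 1) le_rfl).trans hδX.le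

end AnalyticSobolev

open AnalyticSobolev in
theorem statement11_general (d : ℕ) (s₀ s K : ℝ) (hs₀ : (d : ℝ) / 2 < s₀)
    (hs : 0 ≤ s) (hK : 0 < K)
    (a : ℕ → ℂ) (ha0 : a 0 = 0) (haK : ∀ n : ℕ, ‖a n‖ ≤ K ^ n) :
    ∃ ε₀ : ℝ, 0 < ε₀ ∧ ∃ C : ℝ, 0 < C ∧
      ∀ σ : ℝ, 0 < σ → ∀ c : (Fin d → ℤ) → ℂ,
        hNormSq σ s c ≠ ⊤ → hNorm σ s₀ c ≤ ENNReal.ofReal ε₀ →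
        hNorm σ s (fun ξ => ∑' n : ℕ, a n * convPow c n ξ)
          ≤ ENNReal.ofReal C * hNorm σ s c := by
  obtain ⟨C, hC, hpow⟩ := exists_hNorm_convPow_succ_le hs₀ hs
  obtain ⟨ε₀, hε₀, hε₀C⟩ := exists_pos_mul_ofReal_le (X := ENNReal.ofReal K * (2 * C))
    (by finiteness)
  refine ⟨ε₀, hε₀, 2 * K, by positivity, fun σ hσ c _ hc => ?_⟩
  have haK' : ∀ n, ‖a n‖ₑ ≤ ENNReal.ofReal K ^ n := fun n => by
    rw [← ofReal_norm, ← ENNReal.ofReal_pow hK.le]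
    exact ENNReal.ofReal_le_ofReal (haK n)
  have hterm : ∀ n, ‖a (n + 1)‖ₑ * hNorm σ s (convPow c (n + 1))
      ≤ ENNReal.ofReal K * 2⁻¹ ^ n * hNorm σ s c := fun n =>
    calc _ ≤ ENNReal.ofReal K ^ (n + 1) * ((2 * C * hNorm σ s₀ c) ^ n * hNorm σ s c) :=
          mul_le_mul' (haK' _) (hpow σ hσ.le c n)
      _ = ENNReal.ofReal K * (ENNReal.ofReal K * (2 * C) * hNorm σ s₀ c) ^ n * hNorm σ s c := by
          ring
      _ ≤ ENNReal.ofReal K * 2⁻¹ ^ n * hNorm σ s c := by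
          gcongr
          exact (mul_le_mul' le_rfl hc).trans hε₀C
  calc hNorm σ s (fun ξ => ∑' n, a n * convPow c n ξ)
      ≤ ∑' n, ‖a n‖ₑ * hNorm σ s (convPow c n) := hNorm_tsum_mul_convPow_le σ s a c
    _ = ∑' n, ‖a (n + 1)‖ₑ * hNorm σ s (convPow c (n + 1)) := by
        rw [tsum_eq_zero_add' ENNReal.summable, ha0, enorm_zero, zero_mul, zero_add]
    _ ≤ ∑' n, ENNReal.ofReal K * 2⁻¹ ^ n * hNorm σ s c := ENNReal.tsum_le_tsum hterm
    _ = ENNReal.ofReal (2 * K) * hNorm σ s c := by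
        rw [ENNReal.tsum_mul_right, ENNReal.tsum_mul_left, ENNReal.tsum_geometric_two,
          ENNReal.ofReal_mul zero_le_two, ENNReal.ofReal_ofNat, mul_comm (2 : ℝ≥0∞)]

/-- Composition with a holomorphic function `f(z) = Σ aₙ zⁿ`,
`f(0)=0`, holomorphic on `{|z| < M₀}` and with coefficients `|aₙ| ≤ Kⁿ`:
there exist `ε₀ > 0` and `C > 0` such that for all `σ > 0` and all
`u ∈ H^{σ,s} ∩ H^{σ,s₀}` with `‖u‖_{H^{σ,s₀}} ≤ ε₀`, one has
`f(u) ∈ H^{σ,s}` with `‖f(u)‖_{H^{σ,s}} ≤ C ‖u‖_{H^{σ,s}}`. -/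
theorem statement11 (d : ℕ) (s₀ s M₀ K : ℝ) (hs₀ : (d : ℝ) / 2 < s₀)
    (hs : 0 ≤ s) (hM₀ : 0 < M₀) (hK : 0 < K)
    (a : ℕ → ℂ) (ha0 : a 0 = 0) (haK : ∀ n : ℕ, ‖a n‖ ≤ K ^ n) :
    ∃ ε₀ : ℝ, 0 < ε₀ ∧ ∃ C : ℝ, 0 < C ∧
      ∀ σ : ℝ, 0 < σ → ∀ c : (Fin d → ℤ) → ℂ,
        hNormSq σ s c ≠ ⊤ → hNorm σ s₀ c ≤ ENNReal.ofReal ε₀ →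
        hNorm σ s (fun ξ => ∑' n : ℕ, a n * convPow c n ξ)
          ≤ ENNReal.ofReal C * hNorm σ s c :=
  statement11_general d s₀ s K hs₀ hs hK a ha0 haK
end
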